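/- arXiv:2406.18658 — 9 statements merged into one kernel-verified Lean document; each statement's English description precedes it below -/
import Mathlib

section
/- For any α ∈ (0,1), λ ∈ (0,1), and all x > 0, the pointwise inequality α(1-α)/(x(1-α+αx)) ≤ c·λ·(1-λ)·x^(-λ-1) holds with constant c = (α/λ)·(λ(1-α)/((1-λ)α))^λ. -/
open Real

/-!
Clearing denominators, the inequality becomes `(1 - α) x^λ ≤ (1 - λ) y^λ (1 - α + α x)` with
`y = λ(1 - α)/((1 - λ)α)`. Its right-hand side is `(1 - α)` times the tangent line of the concave
function `x ↦ x^λ` at `y`; the point `y` is chosen so that the slopes match, and the tangent line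
dominates the concave function.
-/

theorem rpow_le_rpow_mul_one_sub_add_mul_div {x y l : ℝ} (hx : 0 ≤ x) (hy : 0 < y)
    (hl0 : 0 ≤ l) (hl1 : l ≤ 1) : x ^ l ≤ y ^ l * (1 - l + l * (x / y)) := by
  have hxy : 0 ≤ x / y := div_nonneg hx hy.le
  have hbernoulli : (x / y) ^ l ≤ 1 - l + l * (x / y) := by
    have := rpow_one_add_le_one_add_mul_self (s := x / y - 1) (by linarith) hl0 hl1
    rw [add_sub_cancel] at this
    linarith
  calc x ^ l = y ^ l * (x / y) ^ l := by rw [← mul_rpow hy.le hxy, mul_div_cancel₀ x hy.ne']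
    _ ≤ y ^ l * (1 - l + l * (x / y)) := mul_le_mul_of_nonneg_left hbernoulli (rpow_nonneg hy.le l)

theorem rpow_neg_sub_one_eq_inv {x : ℝ} (hx : 0 < x) (l : ℝ) : x ^ (-l - 1) = (x * x ^ l)⁻¹ := by
  rw [show -l - 1 = -(l + 1) by ring, rpow_neg hx.le, rpow_add_one hx.ne', mul_comm]

/-- For `α, λ ∈ (0,1)` and all `x > 0`, the pointwise inequality
`α(1-α)/(x(1-α+αx)) ≤ c·λ·(1-λ)·x^(-λ-1)` holds with
`c = (α/λ)·(λ(1-α)/((1-λ)α))^λ`. -/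
theorem stmt_1 (α l : ℝ) (hα : α ∈ Set.Ioo (0:ℝ) 1) (hl : l ∈ Set.Ioo (0:ℝ) 1)
    (c : ℝ) (hc : c = (α / l) * (l * (1 - α) / ((1 - l) * α)) ^ l) :
    ∀ x : ℝ, 0 < x →
      α * (1 - α) / (x * (1 - α + α * x)) ≤ c * l * (1 - l) * x ^ (-l - 1) := by
  obtain ⟨hα0, hα1⟩ := hα
  obtain ⟨hl0, hl1⟩ := hl
  intro x hx
  have h1α : 0 < 1 - α := sub_pos.mpr hα1
  have h1l : 0 < 1 - l := sub_pos.mpr hl1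
  set y := l * (1 - α) / ((1 - l) * α) with hy
  have hy0 : 0 < y := by positivity
  have hcy : c * l * (1 - l) = α * (1 - l) * y ^ l := by rw [hc]; field_simp
  have hslope : (1 - α) * (l / y) = (1 - l) * α := by rw [hy]; field_simp
  have htangent : (1 - α) * x ^ l ≤ (1 - l) * y ^ l * (1 - α + α * x) :=
    calc (1 - α) * x ^ l ≤ (1 - α) * (y ^ l * (1 - l + l * (x / y))) :=
          mul_le_mul_of_nonneg_left
            (rpow_le_rpow_mul_one_sub_add_mul_div hx.le hy0 hl0.le hl1.le) h1α.le
      _ = y ^ l * ((1 - α) * (1 - l) + (1 - α) * (l / y) * x) := by ring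
      _ = (1 - l) * y ^ l * (1 - α + α * x) := by rw [hslope]; ring
  rw [hcy, rpow_neg_sub_one_eq_inv hx, ← div_eq_mul_inv,
    div_le_div_iff₀ (by positivity) (by positivity)]
  have := mul_le_mul_of_nonneg_left htangent (mul_nonneg hα0.le hx.le)
  linarith
end

section
/- For two binary probability distributions P = (p, 1-p) and Q = (q, 1-q) with 0 ≤ p, q ≤ 1 satisfying the ε-LDP constraints E_{e^ε}(P‖Q) = 0 and E_{e^ε}(Q‖P) = 0 (i.e. p ≤ e^ε q, 1-p ≤ e^ε(1-q), q ≤ e^ε p, 1-q ≤ e^ε(1-p)), the total variation distance |p - q| is at most e^{-ε}(e^ε - 1)²/(e^ε - e^{-ε}), and this bound is attained. -/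
open Real

/-! With `a = e^ε` the bound simplifies to `(a - 1)/(a + 1) = tanh (ε/2)`. Adding the constraints
`p ≤ a q` and `1 - q ≤ a (1 - p)` gives `(a + 1)(p - q) ≤ a - 1`, and symmetrically for `q - p`.
Both constraints are tight at `p = a/(a + 1)`, `q = 1/(a + 1)`, which attains the bound. -/

lemma inv_mul_sub_one_sq_div_sub_inv {a : ℝ} (h0 : 0 < a) (h1 : a ≠ 1) :
    a⁻¹ * (a - 1) ^ 2 / (a - a⁻¹) = (a - 1) / (a + 1) := by
  have hadd : a + 1 ≠ 0 := by positivity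
  have hsub_inv : a - a⁻¹ ≠ 0 := by
    rw [sub_ne_zero]
    intro h
    apply h1
    nlinarith [mul_inv_cancel₀ h0.ne']
  rw [div_eq_div_iff hsub_inv hadd]
  field_simp
  ring

lemma abs_sub_le_of_ratio_bounds {a p q : ℝ} (ha : 0 < a + 1)
    (hpq : p ≤ a * q) (hpq' : 1 - p ≤ a * (1 - q))
    (hqp : q ≤ a * p) (hqp' : 1 - q ≤ a * (1 - p)) :
    |p - q| ≤ (a - 1) / (a + 1) := by
  rw [abs_le, ← neg_div, le_div_iff₀ ha, div_le_iff₀ ha]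
  constructor <;> linarith

lemma exists_ratio_bounds_abs_sub_eq {a : ℝ} (ha : 1 ≤ a) :
    ∃ p q : ℝ, 0 ≤ p ∧ p ≤ 1 ∧ 0 ≤ q ∧ q ≤ 1 ∧
      p ≤ a * q ∧ 1 - p ≤ a * (1 - q) ∧ q ≤ a * p ∧ 1 - q ≤ a * (1 - p) ∧
      |p - q| = (a - 1) / (a + 1) := by
  have hpos : 0 < a + 1 := by linarith
  have hp : 1 - a / (a + 1) = 1 / (a + 1) := by field_simp; ring
  have hq : 1 - 1 / (a + 1) = a / (a + 1) := by field_simp; ring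
  have hsq : a * (a / (a + 1)) = 1 / (a + 1) + (a ^ 2 - 1) / (a + 1) := by field_simp; ring
  have hsq_nonneg : 0 ≤ (a ^ 2 - 1) / (a + 1) := div_nonneg (by nlinarith) hpos.le
  refine ⟨a / (a + 1), 1 / (a + 1), by positivity, ?_, by positivity, ?_, ?_, ?_, ?_, ?_, ?_⟩
  · rw [div_le_one hpos]; linarith
  · rw [div_le_one hpos]; linarith
  · rw [mul_one_div]
  · rw [hp, hq, hsq]; linarith
  · rw [hsq]; linarith
  · rw [hp, hq, mul_one_div]
  · rw [← sub_div, abs_of_nonneg (div_nonneg (by linarith) hpos.le)]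

/-- For binary distributions `(p,1-p)` and `(q,1-q)` satisfying the ε-LDP constraints,
`|p - q| ≤ e^{-ε}(e^ε-1)²/(e^ε - e^{-ε})`, and the bound is attained. -/
theorem stmt_4 (ε : ℝ) (hε : 0 < ε) :
    (∀ p q : ℝ, 0 ≤ p → p ≤ 1 → 0 ≤ q → q ≤ 1 →
      p ≤ Real.exp ε * q → 1 - p ≤ Real.exp ε * (1 - q) →
      q ≤ Real.exp ε * p → 1 - q ≤ Real.exp ε * (1 - p) →
      |p - q| ≤ Real.exp (-ε) * (Real.exp ε - 1)^2 / (Real.exp ε - Real.exp (-ε))) ∧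
    (∃ p q : ℝ, 0 ≤ p ∧ p ≤ 1 ∧ 0 ≤ q ∧ q ≤ 1 ∧
      p ≤ Real.exp ε * q ∧ 1 - p ≤ Real.exp ε * (1 - q) ∧
      q ≤ Real.exp ε * p ∧ 1 - q ≤ Real.exp ε * (1 - p) ∧
      |p - q| = Real.exp (-ε) * (Real.exp ε - 1)^2 / (Real.exp ε - Real.exp (-ε))) := by
  have ha : 1 < exp ε := one_lt_exp_iff.mpr hε
  rw [exp_neg, inv_mul_sub_one_sq_div_sub_inv (exp_pos ε) ha.ne']
  exact ⟨fun p q _ _ _ _ => abs_sub_le_of_ratio_bounds (by linarith),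
    exists_ratio_bounds_abs_sub_eq ha.le⟩
end

section
/- For two binary probability distributions P=(p,1-p), Q=(q,1-q) satisfying p ≤ e^ε q, 1-p ≤ e^ε(1-q), q ≤ e^ε p, and 1-q ≤ e^ε(1-p), the chi-square divergence χ²(P‖Q) = (p-q)²/q + (p-q)²/(1-q) is at most e^{-ε}(e^ε - 1)². -/
open Real

/-- For binary distributions `(p,1-p)` and `(q,1-q)` with `0 < q < 1` satisfying the
ε-LDP constraints, the chi-square divergence `(p-q)²/q + (p-q)²/(1-q)` is at most
`e^{-ε}(e^ε-1)²`. -/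
theorem stmt_5 (ε p q : ℝ) (hε : 0 < ε)
    (hp0 : 0 ≤ p) (hp1 : p ≤ 1) (hq0 : 0 < q) (hq1 : q < 1)
    (h1 : p ≤ Real.exp ε * q) (h2 : 1 - p ≤ Real.exp ε * (1 - q))
    (h3 : q ≤ Real.exp ε * p) (h4 : 1 - q ≤ Real.exp ε * (1 - p)) :
    (p - q)^2 / q + (p - q)^2 / (1 - q) ≤ Real.exp (-ε) * (Real.exp ε - 1)^2 := by
  have hq1' : 0 < 1 - q := by linarith
  have hE : (1:ℝ) < Real.exp ε := by
    have := Real.add_one_lt_exp (ne_of_gt hε); linarith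
  have hEpos : 0 < Real.exp ε := Real.exp_pos ε
  have hkey2 : Real.exp ε * (p - q)^2 ≤ (Real.exp ε - 1)^2 * (q * (1 - q)) := by
    rcases le_total q p with h | h
    · have a1 : p - q ≤ (Real.exp ε - 1) * q := by nlinarith
      have a2 : Real.exp ε * (p - q) ≤ (Real.exp ε - 1) * (1 - q) := by nlinarith
      nlinarith [mul_le_mul a1 a2 (by nlinarith) (by nlinarith)]
    · have a1 : q - p ≤ (Real.exp ε - 1) * (1 - q) := by nlinarith
      have a2 : Real.exp ε * (q - p) ≤ (Real.exp ε - 1) * q := by nlinarith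
      nlinarith [mul_le_mul a1 a2 (by nlinarith) (by nlinarith)]
  have hkey : (p - q)^2 ≤ Real.exp (-ε) * (Real.exp ε - 1)^2 * (q * (1 - q)) := by
    rw [Real.exp_neg, inv_mul_eq_div, div_mul_eq_mul_div, le_div_iff₀ hEpos]
    nlinarith [hkey2]
  have heq : (p - q)^2 / q + (p - q)^2 / (1 - q) = (p - q)^2 / (q * (1 - q)) := by
    field_simp; ring
  rw [heq, div_le_iff₀ (mul_pos hq0 hq1')]
  exact hkey
end

section
/- For any two probability distributions P, Q on a finite set and any n ≥ 1, the Jensen–Shannon divergence is subadditive under tensor powers: JS_p(P^{⊗n} ‖ Q^{⊗n}) ≤ n · JS_p(P ‖ Q). -/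
open Real BigOperators

/-- Kullback–Leibler divergence between finitely supported distributions,
with the convention `0·log(0/q) = 0` (via `Real.log`). -/
noncomputable def KLdiv {α : Type*} [Fintype α] (P Q : α → ℝ) : ℝ :=
  ∑ x, P x * Real.log (P x / Q x)

/-- Jensen–Shannon divergence with weight `p`. -/
noncomputable def JSdiv {α : Type*} [Fintype α] (p : ℝ) (P Q : α → ℝ) : ℝ :=
  p * KLdiv P (fun x => p * P x + (1 - p) * Q x) +
    (1 - p) * KLdiv Q (fun x => p * P x + (1 - p) * Q x)

/-- `n`-fold product (tensor power) of a distribution. -/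
noncomputable def prodPow {α : Type*} (P : α → ℝ) (n : ℕ) : (Fin n → α) → ℝ :=
  fun f => ∏ k, P (f k)

/-!
For `M = p P + (1-p) Q` and any `R`, the compensation identity
`p D(P‖R) + (1-p) D(Q‖R) = JS_p(P‖Q) + D(M‖R)` holds. Taking `R = M^{⊗n}` at level `n` gives
`JS_p(P^{⊗n}‖Q^{⊗n}) ≤ p D(P^{⊗n}‖M^{⊗n}) + (1-p) D(Q^{⊗n}‖M^{⊗n})` by Gibbs' inequality, and the
right-hand side is `n · JS_p(P‖Q)` because the KL divergence is additive on tensor powers.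
-/

open Function

section KL

variable {β : Type*} [Fintype β]

lemma sub_le_mul_log_div {r s : ℝ} (hr : 0 ≤ r) (hs : 0 ≤ s) (hrs : r ≠ 0 → s ≠ 0) :
    r - s ≤ r * log (r / s) := by
  rcases eq_or_ne r 0 with rfl | hr0
  · simpa using hs
  have hs0 : 0 < s := hs.lt_of_ne (hrs hr0).symm
  have h := mul_le_mul_of_nonneg_left (self_sub_one_le_mul_log (div_nonneg hr hs)) hs
  calc r - s = s * (r / s - 1) := by field_simp
    _ ≤ s * (r / s * log (r / s)) := h
    _ = r * log (r / s) := by field_simp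

lemma KLdiv_eq_sub {R S : β → ℝ} (h : support R ⊆ support S) :
    KLdiv R S = ∑ x, R x * log (R x) - ∑ x, R x * log (S x) := by
  rw [KLdiv, ← Finset.sum_sub_distrib]
  refine Finset.sum_congr rfl fun x _ => ?_
  rcases eq_or_ne (R x) 0 with hx | hx
  · simp [hx]
  · rw [log_div hx (h hx)]; ring

lemma KLdiv_nonneg {R S : β → ℝ} (hR : 0 ≤ R) (hS : 0 ≤ S) (h : support R ⊆ support S)
    (hsum : ∑ x, S x ≤ ∑ x, R x) : 0 ≤ KLdiv R S :=
  calc 0 ≤ ∑ x, (R x - S x) := by rw [Finset.sum_sub_distrib]; linarith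
    _ ≤ KLdiv R S := Finset.sum_le_sum fun x _ => sub_le_mul_log_div (hR x) (hS x) (@h x)

end KL

section Mixture

variable {β : Type*}

def mixture (p : ℝ) (P Q : β → ℝ) : β → ℝ := fun x => p * P x + (1 - p) * Q x

lemma mixture_nonneg {p : ℝ} (hp0 : 0 ≤ p) (hp1 : p ≤ 1) {P Q : β → ℝ} (hP : 0 ≤ P)
    (hQ : 0 ≤ Q) : 0 ≤ mixture p P Q := fun x =>
  add_nonneg (mul_nonneg hp0 (hP x)) (mul_nonneg (sub_nonneg.2 hp1) (hQ x))

lemma support_mixture_subset (p : ℝ) (P Q : β → ℝ) :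
    support (mixture p P Q) ⊆ support P ∪ support Q := fun x hx => by
  by_contra h
  simp_all [mixture]

lemma support_subset_support_mixture_left {p : ℝ} (hp0 : 0 < p) (hp1 : p ≤ 1) {P Q : β → ℝ}
    (hP : 0 ≤ P) (hQ : 0 ≤ Q) : support P ⊆ support (mixture p P Q) := fun x hx => by
  have hPx : 0 < P x := (hP x).lt_of_ne (Ne.symm hx)
  have : 0 < mixture p P Q x :=
    add_pos_of_pos_of_nonneg (mul_pos hp0 hPx) (mul_nonneg (sub_nonneg.2 hp1) (hQ x))
  exact this.ne'

lemma support_subset_support_mixture_right {p : ℝ} (hp0 : 0 ≤ p) (hp1 : p < 1) {P Q : β → ℝ}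
    (hP : 0 ≤ P) (hQ : 0 ≤ Q) : support Q ⊆ support (mixture p P Q) := fun x hx => by
  have hQx : 0 < Q x := (hQ x).lt_of_ne (Ne.symm hx)
  have : 0 < mixture p P Q x :=
    add_pos_of_nonneg_of_pos (mul_nonneg hp0 (hP x)) (mul_pos (sub_pos.2 hp1) hQx)
  exact this.ne'

variable [Fintype β]

lemma JSdiv_eq (p : ℝ) (P Q : β → ℝ) :
    JSdiv p P Q = p * KLdiv P (mixture p P Q) + (1 - p) * KLdiv Q (mixture p P Q) := rfl

lemma sum_mixture (p : ℝ) (P Q : β → ℝ) :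
    ∑ x, mixture p P Q x = p * ∑ x, P x + (1 - p) * ∑ x, Q x := by
  simp only [mixture, Finset.sum_add_distrib, Finset.mul_sum]

lemma mul_KLdiv_add_mul_KLdiv {p : ℝ} {P Q R : β → ℝ}
    (hPM : support P ⊆ support (mixture p P Q)) (hQM : support Q ⊆ support (mixture p P Q))
    (hPR : support P ⊆ support R) (hQR : support Q ⊆ support R) :
    p * KLdiv P R + (1 - p) * KLdiv Q R = JSdiv p P Q + KLdiv (mixture p P Q) R := by
  have hMR : support (mixture p P Q) ⊆ support R :=
    (support_mixture_subset p P Q).trans (Set.union_subset hPR hQR)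
  have hsplit : ∀ S : β → ℝ, ∑ x, mixture p P Q x * log (S x)
      = p * ∑ x, P x * log (S x) + (1 - p) * ∑ x, Q x * log (S x) := fun S => by
    simp only [mixture, add_mul, Finset.sum_add_distrib, Finset.mul_sum, mul_assoc]
  rw [JSdiv_eq, KLdiv_eq_sub hPM, KLdiv_eq_sub hQM, KLdiv_eq_sub hPR, KLdiv_eq_sub hQR,
    KLdiv_eq_sub hMR, hsplit, hsplit]
  ring

end Mixture

section TensorPower

variable {α : Type*}

lemma prodPow_nonneg {P : α → ℝ} (hP : 0 ≤ P) (n : ℕ) : 0 ≤ prodPow P n := fun _ =>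
  Finset.prod_nonneg fun _ _ => hP _

lemma mem_support_prodPow {P : α → ℝ} {n : ℕ} {f : Fin n → α} :
    f ∈ support (prodPow P n) ↔ ∀ k, f k ∈ support P := by
  simp [prodPow, Finset.prod_ne_zero_iff]

lemma support_prodPow_subset {P R : α → ℝ} (h : support P ⊆ support R) (n : ℕ) :
    support (prodPow P n) ⊆ support (prodPow R n) := fun _ hf =>
  mem_support_prodPow.2 fun k => h (mem_support_prodPow.1 hf k)

variable [Fintype α]

lemma sum_prodPow {P : α → ℝ} (hP : ∑ x, P x = 1) (n : ℕ) : ∑ f, prodPow P n f = 1 := by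
  simp [prodPow, ← Fintype.prod_sum, hP]

lemma sum_prodPow_mul_apply {P : α → ℝ} (hP : ∑ x, P x = 1) {n : ℕ} (c : α → ℝ) (k : Fin n) :
    ∑ f, prodPow P n f * c (f k) = ∑ x, P x * c x := by
  classical
  set g : Fin n → α → ℝ := fun j x => if j = k then P x * c x else P x
  have hfactor : ∀ f : Fin n → α, prodPow P n f * c (f k) = ∏ j, g j (f j) := fun f => by
    have hterm : ∀ j, g j (f j) = P (f j) * (if j = k then c (f j) else 1) := fun j => by
      simp only [g]; split_ifs <;> ring
    simp_rw [hterm, Finset.prod_mul_distrib, Finset.prod_ite_eq' Finset.univ k, prodPow,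
      Finset.mem_univ, if_true]
  calc ∑ f, prodPow P n f * c (f k) = ∑ f : Fin n → α, ∏ j, g j (f j) :=
        Finset.sum_congr rfl fun f _ => hfactor f
    _ = ∏ j, ∑ x, g j x := (Fintype.prod_sum g).symm
    _ = ∑ x, g k x := Finset.prod_eq_single_of_mem k (Finset.mem_univ k) fun j _ hj => by
        simp [g, hj, hP]
    _ = ∑ x, P x * c x := by simp [g]

lemma sum_prodPow_mul_log_prodPow {P R : α → ℝ} (hP : ∑ x, P x = 1)
    (h : support P ⊆ support R) (n : ℕ) :
    ∑ f, prodPow P n f * log (prodPow R n f) = n * ∑ x, P x * log (R x) := by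
  have hlog : ∀ f, prodPow P n f * log (prodPow R n f)
      = ∑ k, prodPow P n f * log (R (f k)) := fun f => by
    rcases eq_or_ne (prodPow P n f) 0 with hf | hf
    · simp [hf]
    · rw [← Finset.mul_sum, show prodPow R n f = ∏ k, R (f k) from rfl,
        log_prod fun k _ => h (mem_support_prodPow.1 hf k)]
  simp_rw [hlog]
  rw [Finset.sum_comm]
  simp [sum_prodPow_mul_apply hP (fun x => log (R x))]

lemma KLdiv_prodPow {P R : α → ℝ} (hP : ∑ x, P x = 1) (h : support P ⊆ support R) (n : ℕ) :
    KLdiv (prodPow P n) (prodPow R n) = n * KLdiv P R := by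
  rw [KLdiv_eq_sub (support_prodPow_subset h n), KLdiv_eq_sub h,
    sum_prodPow_mul_log_prodPow hP subset_rfl, sum_prodPow_mul_log_prodPow hP h, mul_sub]

end TensorPower

theorem stmt_6_general {α : Type*} [Fintype α] (P Q : α → ℝ) (p : ℝ)
    (hP0 : ∀ x, 0 ≤ P x) (hQ0 : ∀ x, 0 ≤ Q x)
    (hP1 : ∑ x, P x = 1) (hQ1 : ∑ x, Q x = 1)
    (hp : p ∈ Set.Ioo (0:ℝ) 1) (n : ℕ) :
    JSdiv p (prodPow P n) (prodPow Q n) ≤ n * JSdiv p P Q := by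
  obtain ⟨hp0, hp1⟩ := hp
  set M := mixture p P Q
  set Pn := prodPow P n
  set Qn := prodPow Q n
  have hPn0 : 0 ≤ Pn := prodPow_nonneg hP0 n
  have hQn0 : 0 ≤ Qn := prodPow_nonneg hQ0 n
  have hPM : support P ⊆ support M := support_subset_support_mixture_left hp0 hp1.le hP0 hQ0
  have hQM : support Q ⊆ support M := support_subset_support_mixture_right hp0.le hp1 hP0 hQ0
  have hM1 : ∑ x, M x = 1 := by rw [sum_mixture, hP1, hQ1]; ring
  have hgibbs : 0 ≤ KLdiv (mixture p Pn Qn) (prodPow M n) :=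
    KLdiv_nonneg (mixture_nonneg hp0.le hp1.le hPn0 hQn0)
      (prodPow_nonneg (mixture_nonneg hp0.le hp1.le hP0 hQ0) n)
      ((support_mixture_subset p Pn Qn).trans
        (Set.union_subset (support_prodPow_subset hPM n) (support_prodPow_subset hQM n)))
      (by rw [sum_mixture, sum_prodPow hP1, sum_prodPow hQ1, sum_prodPow hM1]; linarith)
  have hcomp := mul_KLdiv_add_mul_KLdiv (R := prodPow M n)
    (support_subset_support_mixture_left hp0 hp1.le hPn0 hQn0)
    (support_subset_support_mixture_right hp0.le hp1 hPn0 hQn0)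
    (support_prodPow_subset hPM n) (support_prodPow_subset hQM n)
  rw [KLdiv_prodPow hP1 hPM, KLdiv_prodPow hQ1 hQM] at hcomp
  rw [JSdiv_eq p P Q]
  linarith

/-- The Jensen–Shannon divergence is subadditive under tensor powers:
`JS_p(P^{⊗n} ‖ Q^{⊗n}) ≤ n · JS_p(P ‖ Q)`. -/
theorem stmt_6 {α : Type*} [Fintype α] (P Q : α → ℝ) (p : ℝ)
    (hP0 : ∀ x, 0 ≤ P x) (hQ0 : ∀ x, 0 ≤ Q x)
    (hP1 : ∑ x, P x = 1) (hQ1 : ∑ x, Q x = 1)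
    (hp : p ∈ Set.Ioo (0:ℝ) 1) (n : ℕ) (hn : 1 ≤ n) :
    JSdiv p (prodPow P n) (prodPow Q n) ≤ n * JSdiv p P Q :=
  stmt_6_general P Q p hP0 hQ0 hP1 hQ1 hp n
end

section
/- For any two probability distributions P, Q on a finite set, any α ∈ (0,1) and λ ∈ (0,1), the Jensen–Shannon divergence satisfies JS_α(P‖Q) ≤ α·(λ(1-α)/((1-λ)α))^λ · H_{1-λ}(P‖Q), where H_s is the Hellinger divergence of order s. -/
open Real BigOperators

/-- Hellinger divergence of order `s`. -/
noncomputable def Hellinger {α : Type*} [Fintype α] (s : ℝ) (P Q : α → ℝ) : ℝ :=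
  (1 / (s - 1)) * ((∑ x, P x ^ s * Q x ^ (1 - s)) - 1)

/-!
Both sides are f-divergences: `JS_α` has generator
`f_α(t) = α t log t - (αt + 1 - α) log(αt + 1 - α)` and `H_{1-l}` has generator
`(1 - t^(1-l)) / l`, to which we add `(1 - l)/l · (t - 1)` (invisible in the divergence) so that
both generators vanish to second order at `t = 1`. Weighted AM–GM gives `f_α'' ≤ C g''` on
`(0, ∞)` for the constant `C` of the statement, so `C g - f_α` is convex with a double zero at 1,
hence nonnegative, and summing `q (C g - f_α)(p/q)` gives the inequality on the support of `Q`.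
A point with `q = 0` contributes `p` times the slopes at infinity, `-α log α` and `C (1 - l)/l`;
these compare as the limits of `f_α'` and `C g'`, since `(C g - f_α)' ≥ 0` on `(1, ∞)`.
-/

open Filter Topology

noncomputable def jsGenerator (α t : ℝ) : ℝ :=
  α * (t * log t) - (α * t + (1 - α)) * log (α * t + (1 - α))

noncomputable def hellingerGenerator (l t : ℝ) : ℝ :=
  (1 - t ^ (1 - l) + (1 - l) * (t - 1)) / l

section Generators

variable {α l C : ℝ}

lemma hasDerivAt_jsGenerator {t : ℝ} (ht : 0 < t) (hm : 0 < α * t + (1 - α)) :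
    HasDerivAt (jsGenerator α) (α * (log t - log (α * t + (1 - α)))) t := by
  have hlin : HasDerivAt (fun t => α * t + (1 - α)) α t := by
    simpa using ((hasDerivAt_id t).const_mul α).add_const (1 - α)
  have := ((Real.hasDerivAt_mul_log ht.ne').const_mul α).sub
    ((Real.hasDerivAt_mul_log hm.ne').comp t hlin)
  refine this.congr_deriv ?_
  ring

lemma hasDerivAt_deriv_jsGenerator {t : ℝ} (ht : 0 < t) (hm : 0 < α * t + (1 - α)) :
    HasDerivAt (fun t => α * (log t - log (α * t + (1 - α))))
      (α * (1 - α) / (t * (α * t + (1 - α)))) t := by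
  have hlin : HasDerivAt (fun t => α * t + (1 - α)) α t := by
    simpa using ((hasDerivAt_id t).const_mul α).add_const (1 - α)
  have := ((Real.hasDerivAt_log ht.ne').sub ((Real.hasDerivAt_log hm.ne').comp t hlin)).const_mul α
  refine this.congr_deriv ?_
  field_simp
  ring

lemma hasDerivAt_hellingerGenerator {t : ℝ} (ht : 0 < t) :
    HasDerivAt (hellingerGenerator l) ((1 - l) / l * (1 - t ^ (-l))) t := by
  have := (((Real.hasDerivAt_rpow_const (p := 1 - l) (Or.inl ht.ne')).const_sub 1).add
    (((hasDerivAt_id t).sub_const 1).const_mul (1 - l))).div_const l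
  refine this.congr_deriv ?_
  rw [show 1 - l - 1 = -l by ring]
  ring

lemma hasDerivAt_deriv_hellingerGenerator (hl : l ≠ 0) {t : ℝ} (ht : 0 < t) :
    HasDerivAt (fun t => (1 - l) / l * (1 - t ^ (-l))) ((1 - l) * t ^ (-l - 1)) t := by
  have := ((Real.hasDerivAt_rpow_const (p := -l) (Or.inl ht.ne')).const_sub 1).const_mul
    ((1 - l) / l)
  refine this.congr_deriv ?_
  field_simp

lemma continuous_jsGenerator : Continuous (jsGenerator α) :=
  (continuous_const.mul Real.continuous_mul_log).sub
    (Real.continuous_mul_log.comp (by fun_prop))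

lemma continuous_hellingerGenerator (hl : l ≤ 1) : Continuous (hellingerGenerator l) := by
  have := Real.continuous_rpow_const (q := 1 - l) (by linarith)
  unfold hellingerGenerator
  fun_prop

lemma hasDerivAt_mul_hellingerGenerator_sub_jsGenerator (hα0 : 0 ≤ α) (hα1 : α < 1) {t : ℝ}
    (ht : 0 < t) :
    HasDerivAt (fun t => C * hellingerGenerator l t - jsGenerator α t)
      (C * ((1 - l) / l * (1 - t ^ (-l))) - α * (log t - log (α * t + (1 - α)))) t :=
  ((hasDerivAt_hellingerGenerator ht).const_mul C).sub
    (hasDerivAt_jsGenerator ht (by nlinarith))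

lemma convexOn_mul_hellingerGenerator_sub_jsGenerator (hα0 : 0 ≤ α) (hα1 : α < 1)
    (hl0 : l ≠ 0) (hl1 : l ≤ 1)
    (hC : ∀ t > 0, α * (1 - α) / (t * (α * t + (1 - α))) ≤ C * ((1 - l) * t ^ (-l - 1))) :
    ConvexOn ℝ (Set.Ici 0) (fun t => C * hellingerGenerator l t - jsGenerator α t) := by
  have hm : ∀ t : ℝ, 0 < t → 0 < α * t + (1 - α) := fun t ht => by nlinarith
  refine convexOn_of_hasDerivWithinAt2_nonneg (convex_Ici 0)
    (((continuous_hellingerGenerator hl1).const_smul C).sub continuous_jsGenerator).continuousOn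
    (f' := fun t => C * ((1 - l) / l * (1 - t ^ (-l))) - α * (log t - log (α * t + (1 - α))))
    (f'' := fun t => C * ((1 - l) * t ^ (-l - 1)) - α * (1 - α) / (t * (α * t + (1 - α))))
    ?_ ?_ ?_ <;> simp only [interior_Ici, Set.mem_Ioi]
  · exact fun t ht =>
      (hasDerivAt_mul_hellingerGenerator_sub_jsGenerator hα0 hα1 ht).hasDerivWithinAt
  · exact fun t ht => (((hasDerivAt_deriv_hellingerGenerator hl0 ht).const_mul C).sub
      (hasDerivAt_deriv_jsGenerator ht (hm t ht))).hasDerivWithinAt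
  · exact fun t ht => sub_nonneg.mpr (hC t ht)

lemma jsGenerator_le_mul_hellingerGenerator (hα0 : 0 ≤ α) (hα1 : α < 1) (hl0 : l ≠ 0)
    (hl1 : l ≤ 1)
    (hC : ∀ t > 0, α * (1 - α) / (t * (α * t + (1 - α))) ≤ C * ((1 - l) * t ^ (-l - 1)))
    {t : ℝ} (ht : 0 ≤ t) : jsGenerator α t ≤ C * hellingerGenerator l t := by
  have hderiv : HasDerivAt (fun t => C * hellingerGenerator l t - jsGenerator α t) 0 1 := by
    simpa using
      hasDerivAt_mul_hellingerGenerator_sub_jsGenerator (C := C) (l := l) hα0 hα1 one_pos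
  have hmin := (convexOn_mul_hellingerGenerator_sub_jsGenerator hα0 hα1 hl0 hl1 hC
    ).isMinOn_of_rightDeriv_eq_zero (by simp)
      (hderiv.hasDerivWithinAt.derivWithin (uniqueDiffWithinAt_Ioi 1))
  have hone : C * hellingerGenerator l 1 - jsGenerator α 1 = 0 := by
    simp [jsGenerator, hellingerGenerator]
  have hle : C * hellingerGenerator l 1 - jsGenerator α 1 ≤
      C * hellingerGenerator l t - jsGenerator α t := hmin ht
  linarith

lemma neg_mul_log_le_of_deriv2_le (hα0 : 0 < α) (hα1 : α < 1) (hl0 : 0 < l) (hl1 : l ≤ 1)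
    (hC : ∀ t > 0, α * (1 - α) / (t * (α * t + (1 - α))) ≤ C * ((1 - l) * t ^ (-l - 1))) :
    -(α * log α) ≤ C * ((1 - l) / l) := by
  set G' := fun t => C * ((1 - l) / l * (1 - t ^ (-l))) - α * (log t - log (α * t + (1 - α)))
  have hlim : Tendsto G' atTop (𝓝 (C * ((1 - l) / l * (1 - 0)) + α * log α)) := by
    have hfrac : Tendsto (fun t : ℝ => α + (1 - α) / t) atTop (𝓝 α) := by
      simpa using ((tendsto_const_nhds (x := 1 - α)).div_atTop tendsto_id).const_add α
    refine Tendsto.congr' ?_ ((((tendsto_rpow_neg_atTop hl0).const_sub 1).const_mul _).const_mul C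
      |>.add (((Real.continuousAt_log hα0.ne').tendsto.comp hfrac).const_mul α))
    filter_upwards [eventually_gt_atTop 0] with t ht
    have hm : 0 < α * t + (1 - α) := by nlinarith
    rw [Function.comp_apply, show α + (1 - α) / t = (α * t + (1 - α)) / t by field_simp,
      Real.log_div hm.ne' ht.ne']
    ring
  have hG'_nonneg : ∀ᶠ t in atTop, 0 ≤ G' t := by
    filter_upwards [eventually_gt_atTop 1] with t ht
    have hslope := (convexOn_mul_hellingerGenerator_sub_jsGenerator hα0.le hα1 hl0.ne' hl1 hC
      ).slope_le_of_hasDerivAt (x := 1) (by simp) (by simp; linarith) ht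
      (hasDerivAt_mul_hellingerGenerator_sub_jsGenerator hα0.le hα1 (by linarith))
    have hG1 : C * hellingerGenerator l 1 - jsGenerator α 1 = 0 := by
      simp [jsGenerator, hellingerGenerator]
    have hGt := jsGenerator_le_mul_hellingerGenerator hα0.le hα1 hl0.ne' hl1 hC (t := t)
      (by linarith)
    rw [slope_def_field, hG1, sub_zero] at hslope
    exact (div_nonneg (by linarith) (by linarith)).trans hslope
  linarith [ge_of_tendsto hlim hG'_nonneg]

lemma mul_jsGenerator_div (hα0 : 0 ≤ α) (hα1 : α < 1) {p q : ℝ} (hp : 0 ≤ p)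
    (hq : 0 < q) :
    q * jsGenerator α (p / q) =
      α * (p * log (p / (α * p + (1 - α) * q))) +
        (1 - α) * (q * log (q / (α * p + (1 - α) * q))) := by
  have hm : 0 < α * p + (1 - α) * q := by nlinarith
  have hmq : α * (p / q) + (1 - α) = (α * p + (1 - α) * q) / q := by field_simp
  have hqm : log (q / (α * p + (1 - α) * q)) = -log ((α * p + (1 - α) * q) / q) := by
    rw [← Real.log_inv, inv_div]
  unfold jsGenerator
  rw [hmq, hqm]
  rcases hp.eq_or_lt with rfl | hp
  · field_simp
    ring
  · rw [Real.log_div hp.ne' hq.ne', Real.log_div hm.ne' hq.ne', Real.log_div hp.ne' hm.ne']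
    field_simp
    ring

lemma mul_hellingerGenerator_div {p q : ℝ} (hp : 0 ≤ p) (hq : 0 < q) :
    q * hellingerGenerator l (p / q) = (q - p ^ (1 - l) * q ^ l) / l + (1 - l) / l * (p - q) := by
  have hq' : q ^ l * q ^ (1 - l) = q := by
    rw [← Real.rpow_add hq]
    norm_num
  unfold hellingerGenerator
  rw [Real.div_rpow hp hq.le]
  field_simp
  linear_combination p ^ (1 - l) * l⁻¹ * hq'

lemma JSdiv_summand_le (hα0 : 0 < α) (hα1 : α < 1) (hl0 : 0 < l) (hl1 : l ≤ 1)
    (hC : ∀ t > 0, α * (1 - α) / (t * (α * t + (1 - α))) ≤ C * ((1 - l) * t ^ (-l - 1)))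
    {p q : ℝ} (hp : 0 ≤ p) (hq : 0 ≤ q) :
    α * (p * log (p / (α * p + (1 - α) * q))) +
        (1 - α) * (q * log (q / (α * p + (1 - α) * q))) ≤
      C / l * (q - p ^ (1 - l) * q ^ l) + C * ((1 - l) / l) * (p - q) := by
  rcases hq.eq_or_lt with rfl | hq
  · rcases hp.eq_or_lt with rfl | hp
    · simp [Real.zero_rpow hl0.ne']
    have hpα : p / (α * p + (1 - α) * 0) = α⁻¹ := by
      rw [mul_zero, add_zero]
      field_simp
    simp only [hpα, Real.log_inv, Real.zero_rpow hl0.ne']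
    nlinarith [neg_mul_log_le_of_deriv2_le hα0 hα1 hl0 hl1 hC]
  · rw [← mul_jsGenerator_div hα0.le hα1 hp hq, show C / l * (q - p ^ (1 - l) * q ^ l) +
      C * ((1 - l) / l) * (p - q) = q * (C * hellingerGenerator l (p / q)) by
        rw [mul_left_comm, mul_hellingerGenerator_div hp hq]; ring]
    exact mul_le_mul_of_nonneg_left
      (jsGenerator_le_mul_hellingerGenerator hα0.le hα1 hl0.ne' hl1 hC (by positivity)) hq.le

end Generators

theorem JSdiv_le_mul_Hellinger_of_deriv2_le {X : Type*} [Fintype X] {P Q : X → ℝ} {α l C : ℝ}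
    (hP0 : ∀ x, 0 ≤ P x) (hQ0 : ∀ x, 0 ≤ Q x) (hP1 : ∑ x, P x = 1) (hQ1 : ∑ x, Q x = 1)
    (hα0 : 0 < α) (hα1 : α < 1) (hl0 : 0 < l) (hl1 : l ≤ 1)
    (hC : ∀ t > 0, α * (1 - α) / (t * (α * t + (1 - α))) ≤ C * ((1 - l) * t ^ (-l - 1))) :
    JSdiv α P Q ≤ C * Hellinger (1 - l) P Q := by
  have hH : C * Hellinger (1 - l) P Q =
      ∑ x, (C / l * (Q x - P x ^ (1 - l) * Q x ^ l) + C * ((1 - l) / l) * (P x - Q x)) := by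
    simp only [Hellinger, sub_sub_cancel, Finset.sum_add_distrib, ← Finset.mul_sum,
      Finset.sum_sub_distrib, hP1, hQ1]
    field_simp [hl0.ne']
    ring
  rw [hH, JSdiv, KLdiv, KLdiv, Finset.mul_sum, Finset.mul_sum, ← Finset.sum_add_distrib]
  exact Finset.sum_le_sum fun x _ => JSdiv_summand_le hα0 hα1 hl0 hl1 hC (hP0 x) (hQ0 x)

lemma deriv2_jsGenerator_le_const_mul_deriv2_hellingerGenerator {α l t : ℝ} (hα0 : 0 < α)
    (hα1 : α < 1) (hl0 : 0 < l) (hl1 : l < 1) (ht : 0 < t) :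
    α * (1 - α) / (t * (α * t + (1 - α))) ≤
      α * (l * (1 - α) / ((1 - l) * α)) ^ l * ((1 - l) * t ^ (-l - 1)) := by
  set s := l * (1 - α) / ((1 - l) * α) with hs
  have hs0 : 0 < s := by positivity
  have hamgm : t ^ l ≤ s ^ l * (l * (t / s) + (1 - l)) := by
    have hweighted := Real.geom_mean_le_arith_mean2_weighted hl0.le (sub_nonneg.mpr hl1.le)
      (div_pos ht hs0).le zero_le_one (by ring)
    rw [Real.one_rpow, mul_one, mul_one] at hweighted
    calc t ^ l = s ^ l * (t / s) ^ l := by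
          rw [← Real.mul_rpow hs0.le (by positivity), mul_div_cancel₀ t hs0.ne']
      _ ≤ s ^ l * (l * (t / s) + (1 - l)) := by gcongr
  have hst : α * (1 - α) * (l * (t / s)) = α * (1 - l) * (α * t) := by
    rw [hs]
    field_simp [(sub_pos.mpr hα1).ne', (sub_pos.mpr hl1).ne']
  have hrpow : t ^ (-l - 1) = (t ^ l * t)⁻¹ := by
    rw [show -l - 1 = -(l + 1) by ring, Real.rpow_neg ht.le, Real.rpow_add ht, Real.rpow_one]
  have key : α * (1 - α) * t ^ l ≤ α * s ^ l * (1 - l) * (α * t + (1 - α)) :=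
    calc α * (1 - α) * t ^ l ≤ α * (1 - α) * (s ^ l * (l * (t / s) + (1 - l))) :=
          mul_le_mul_of_nonneg_left hamgm (mul_nonneg hα0.le (sub_nonneg.mpr hα1.le))
      _ = α * s ^ l * (1 - l) * (α * t + (1 - α)) := by linear_combination s ^ l * hst
  have hm : 0 < α * t + (1 - α) := by nlinarith
  rw [hrpow, ← div_eq_mul_inv, ← mul_div_assoc,
    div_le_div_iff₀ (by positivity) (by positivity)]
  nlinarith [mul_le_mul_of_nonneg_right key ht.le]

/-- `JS_α(P‖Q) ≤ α·(λ(1-α)/((1-λ)α))^λ · H_{1-λ}(P‖Q)` for `α, λ ∈ (0,1)`. -/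
theorem stmt_8 {X : Type*} [Fintype X] (P Q : X → ℝ) (α l : ℝ)
    (hP0 : ∀ x, 0 ≤ P x) (hQ0 : ∀ x, 0 ≤ Q x)
    (hP1 : ∑ x, P x = 1) (hQ1 : ∑ x, Q x = 1)
    (hα : α ∈ Set.Ioo (0:ℝ) 1) (hl : l ∈ Set.Ioo (0:ℝ) 1) :
    JSdiv α P Q ≤ α * (l * (1 - α) / ((1 - l) * α)) ^ l * Hellinger (1 - l) P Q :=
  JSdiv_le_mul_Hellinger_of_deriv2_le hP0 hQ0 hP1 hQ1 hα.1 hα.2 hl.1 hl.2.le fun _ ht =>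
    deriv2_jsGenerator_le_const_mul_deriv2_hellingerGenerator hα.1 hα.2 hl.1 hl.2 ht
end

section
/- For any two density matrices ρ, σ on ℂ^d, Tr[(√ρ - √σ)²] ≤ ‖ρ - σ‖₁, i.e. the squared Hellinger-type distance (1/2)H_{1/2}(ρ‖σ) is bounded above by the trace distance E₁(ρ‖σ) = (1/2)Tr|ρ - σ| after appropriate normalization: specifically (1/2)·Tr[(√ρ-√σ)²] ≤ (1/2)‖ρ-σ‖₁. -/
open Matrix BigOperators
open scoped ComplexOrder

open scoped Classical in
/-- `Tr[X₊]`: sum of the nonnegative eigenvalues of a Hermitian matrix (0 otherwise). -/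
noncomputable def trPos {n : Type*} [Fintype n] [DecidableEq n] (X : Matrix n n ℂ) : ℝ :=
  if h : X.IsHermitian then ∑ i, max (h.eigenvalues i) 0 else 0

/-- Hockey-stick divergence `E_γ(ρ‖σ) = Tr(ρ - γσ)₊`. -/
noncomputable def Egamma {n : Type*} [Fintype n] [DecidableEq n]
    (γ : ℝ) (ρ σ : Matrix n n ℂ) : ℝ :=
  trPos (ρ - (γ : ℂ) • σ)

/-- Trace norm `‖A‖₁ = Tr√(AᴴA)`: sum of singular values. -/
noncomputable def traceNorm {n : Type*} [Fintype n] [DecidableEq n] (A : Matrix n n ℂ) : ℝ :=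
  ∑ i, Real.sqrt (((Matrix.posSemidef_conjTranspose_mul_self A).1).eigenvalues i)

/-- Real power `ρ^α` of a Hermitian matrix via its spectral decomposition. -/
noncomputable def mpow {n : Type*} [Fintype n] [DecidableEq n]
    {ρ : Matrix n n ℂ} (hρ : ρ.IsHermitian) (α : ℝ) : Matrix n n ℂ :=
  (hρ.eigenvectorUnitary : Matrix n n ℂ) *
    Matrix.diagonal (fun i => ((hρ.eigenvalues i ^ α : ℝ) : ℂ)) *
    (star hρ.eigenvectorUnitary : Matrix n n ℂ)

/-- Fidelity `F(ρ,σ) = ‖√ρ√σ‖₁`. -/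
noncomputable def fid {n : Type*} [Fintype n] [DecidableEq n]
    {ρ σ : Matrix n n ℂ} (hρ : ρ.IsHermitian) (hσ : σ.IsHermitian) : ℝ :=
  traceNorm (mpow hρ (1/2) * mpow hσ (1/2))

/-- A density matrix: positive semidefinite with unit trace. -/
def IsDensity {n : Type*} [Fintype n] [DecidableEq n] (ρ : Matrix n n ℂ) : Prop :=
  ρ.PosSemidef ∧ ρ.trace = 1

/-!
Let `A = √ρ`, `B = √σ`, `C = A - B` and `W = sign C`, so that `W C = C W = |C|` and
`-1 ≤ W ≤ 1`. Since `|C| ∓ C ≥ 0` and `A, B ≥ 0`, the traces of `(|C| - C) A` and `(|C| + C) B`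
are nonnegative, which gives `Tr C² ≤ Tr |C| (A + B)`. As `C (A + B) + (A + B) C = 2 (A² - B²)`,
the right-hand side equals `Tr W (ρ - σ)`, and `Tr W X ≤ Tr |X| = ‖X‖₁` for Hermitian `X` because
`1 ∓ W` and `|X| ± X` are positive semidefinite.
-/

open scoped MatrixOrder

namespace Matrix

theorem trace_mul_mul_self_sub_mul_self {n R : Type*} [Fintype n] [CommRing R]
    [IsAddTorsionFree R] {A B W K : Matrix n n R} (hWC : W * (A - B) = K)
    (hCW : (A - B) * W = K) : (W * (A * A - B * B)).trace = (K * (A + B)).trace := by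
  refine IsAddTorsionFree.nsmul_right_injective two_ne_zero ?_
  have hsplit : 2 • (W * (A * A - B * B)) = W * (A - B) * (A + B) + W * (A + B) * (A - B) := by
    noncomm_ring
  simp only [← trace_smul, hsplit, trace_add, trace_mul_cycle W (A + B) (A - B), hWC, hCW,
    two_nsmul]

variable {n : Type*} [Fintype n] [DecidableEq n]

theorem IsHermitian.trace_cfc {A : Matrix n n ℂ} (hA : A.IsHermitian) (f : ℝ → ℝ) :
    (cfc f A).trace = ∑ i, (f (hA.eigenvalues i) : ℂ) := by
  rw [hA.cfc_eq, IsHermitian.cfc, Unitary.conjStarAlgAut_apply, trace_mul_cycle,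
    Unitary.coe_star_mul_self, one_mul, trace_diagonal]
  rfl

theorem IsHermitian.mpow_eq_cfc {A : Matrix n n ℂ} (hA : A.IsHermitian) (α : ℝ) :
    mpow hA α = cfc (fun x : ℝ => x ^ α) A := by
  rw [hA.cfc_eq]
  rfl

theorem PosSemidef.mpow_half_nonneg {A : Matrix n n ℂ} (hA : A.PosSemidef) :
    0 ≤ mpow hA.1 (1 / 2) := by
  rw [hA.1.mpow_eq_cfc]
  exact cfc_nonneg fun x hx => Real.rpow_nonneg (spectrum_nonneg_of_nonneg hA.nonneg hx) _

theorem PosSemidef.mpow_half_mul_self {A : Matrix n n ℂ} (hA : A.PosSemidef) :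
    mpow hA.1 (1 / 2) * mpow hA.1 (1 / 2) = A := by
  rw [hA.1.mpow_eq_cfc, ← cfc_mul _ _ A]
  conv_rhs => rw [← cfc_id' ℝ A]
  refine cfc_congr fun x hx => ?_
  rw [← Real.sqrt_eq_rpow]
  exact Real.mul_self_sqrt (spectrum_nonneg_of_nonneg hA.nonneg hx)

theorem PosSemidef.trace_mul_nonneg {𝕜 : Type*} [RCLike 𝕜] {M N : Matrix n n 𝕜}
    (hM : M.PosSemidef) (hN : N.PosSemidef) : 0 ≤ (M * N).trace := by
  set S := CFC.sqrt M
  have hS : Sᴴ = S := (CFC.sqrt_nonneg M).posSemidef.1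
  have hSS : S * S = M := CFC.sqrt_mul_sqrt_self M hM.nonneg
  calc 0 ≤ (Sᴴ * N * S).trace := (hN.conjTranspose_mul_mul_same S).trace_nonneg
    _ = (M * N).trace := by rw [hS, trace_mul_cycle, hSS]

theorem PosSemidef.re_trace_mul_nonneg {M N : Matrix n n ℂ} (hM : M.PosSemidef)
    (hN : N.PosSemidef) : 0 ≤ (M * N).trace.re :=
  (Complex.nonneg_iff.mp (hM.trace_mul_nonneg hN)).1

theorem IsHermitian.le_cfc_abs {C : Matrix n n ℂ} (hC : C.IsHermitian) :
    C ≤ cfc (fun x : ℝ => |x|) C := by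
  conv_lhs => rw [← cfc_id' ℝ C hC.isSelfAdjoint]
  exact cfc_mono fun x _ => le_abs_self x

theorem IsHermitian.neg_le_cfc_abs {C : Matrix n n ℂ} (hC : C.IsHermitian) :
    -C ≤ cfc (fun x : ℝ => |x|) C := by
  rw [← cfc_neg_id (R := ℝ) C hC.isSelfAdjoint]
  exact cfc_mono fun x _ => neg_le_abs x

theorem IsHermitian.cfc_sign_mul_self {C : Matrix n n ℂ} (hC : C.IsHermitian) :
    cfc (fun x : ℝ => (SignType.sign x : ℝ)) C * C = cfc (fun x : ℝ => |x|) C := by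
  conv_lhs => enter [2]; rw [← cfc_id' ℝ C hC.isSelfAdjoint]
  rw [← cfc_mul _ _ C (finite_real_spectrum.continuousOn _)
    (finite_real_spectrum.continuousOn _)]
  exact cfc_congr fun x _ => by rw [mul_comm, self_mul_sign]

theorem IsHermitian.mul_cfc_sign {C : Matrix n n ℂ} (hC : C.IsHermitian) :
    C * cfc (fun x : ℝ => (SignType.sign x : ℝ)) C = cfc (fun x : ℝ => |x|) C := by
  conv_lhs => enter [1]; rw [← cfc_id' ℝ C hC.isSelfAdjoint]
  rw [← cfc_mul _ _ C (finite_real_spectrum.continuousOn _)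
    (finite_real_spectrum.continuousOn _)]
  exact cfc_congr fun x _ => self_mul_sign x

theorem cfc_sign_le_one (C : Matrix n n ℂ) :
    cfc (fun x : ℝ => (SignType.sign x : ℝ)) C ≤ 1 :=
  cfc_le_one _ C fun x _ => by cases SignType.sign x <;> norm_num

theorem neg_one_le_cfc_sign (C : Matrix n n ℂ) :
    -1 ≤ cfc (fun x : ℝ => (SignType.sign x : ℝ)) C := by
  rw [neg_le, ← cfc_neg]
  exact cfc_le_one _ C fun x _ => by cases SignType.sign x <;> norm_num

theorem IsHermitian.traceNorm_eq_re_trace_cfc_abs {X : Matrix n n ℂ} (hX : X.IsHermitian) :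
    traceNorm X = (cfc (fun x : ℝ => |x|) X).trace.re := by
  have hsqrt : cfc Real.sqrt (Xᴴ * X) = cfc (fun x : ℝ => |x|) X := by
    rw [hX.eq, ← cfc_id' ℝ X hX.isSelfAdjoint, ← cfc_mul _ _ X, ← cfc_comp _ _ X hX.isSelfAdjoint,
      cfc_id' ℝ X hX.isSelfAdjoint]
    exact cfc_congr fun x _ => Real.sqrt_mul_self_eq_abs x
  rw [← hsqrt, (posSemidef_conjTranspose_mul_self X).1.trace_cfc, Complex.re_sum, traceNorm]
  simp only [Complex.ofReal_re]

theorem IsHermitian.re_trace_mul_le_traceNorm {W X : Matrix n n ℂ} (hX : X.IsHermitian)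
    (hW₁ : W ≤ 1) (hW₂ : -1 ≤ W) : (W * X).trace.re ≤ traceNorm X := by
  set K := cfc (fun x : ℝ => |x|) X
  have h₁ : 0 ≤ ((1 - W) * (K - -X)).trace.re :=
    (le_iff.mp hW₁).re_trace_mul_nonneg (le_iff.mp hX.neg_le_cfc_abs)
  have h₂ : 0 ≤ ((W - -1) * (K - X)).trace.re :=
    (le_iff.mp hW₂).re_trace_mul_nonneg (le_iff.mp hX.le_cfc_abs)
  have hsum : (1 - W) * (K - -X) + (W - -1) * (K - X) = (K - W * X) + (K - W * X) := by
    noncomm_ring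
  have := congrArg (fun M => M.trace.re) hsum
  simp only [trace_add, trace_sub, Complex.add_re, Complex.sub_re] at this
  rw [hX.traceNorm_eq_re_trace_cfc_abs]
  linarith

theorem PosSemidef.re_trace_sub_sq_le {A B : Matrix n n ℂ} (hA : A.PosSemidef)
    (hB : B.PosSemidef) :
    ((A - B) ^ 2).trace.re ≤ (cfc (fun x : ℝ => |x|) (A - B) * (A + B)).trace.re := by
  have hC : (A - B).IsHermitian := hA.1.sub hB.1
  set K := cfc (fun x : ℝ => |x|) (A - B)
  have h₁ : 0 ≤ ((K - (A - B)) * A).trace.re := (le_iff.mp hC.le_cfc_abs).re_trace_mul_nonneg hA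
  have h₂ : 0 ≤ ((K - -(A - B)) * B).trace.re :=
    (le_iff.mp hC.neg_le_cfc_abs).re_trace_mul_nonneg hB
  have hsum : (K - (A - B)) * A + (K - -(A - B)) * B = K * (A + B) - (A - B) ^ 2 := by
    noncomm_ring
  have := congrArg (fun M => M.trace.re) hsum
  simp only [trace_add, trace_sub, Complex.add_re, Complex.sub_re] at this
  linarith

end Matrix

/-- `(1/2)·Tr[(√ρ - √σ)²] ≤ (1/2)‖ρ - σ‖₁`, i.e. `(1/2)H_{1/2}(ρ‖σ) ≤ E₁(ρ‖σ)`. -/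
theorem stmt_11 {n : Type*} [Fintype n] [DecidableEq n] (ρ σ : Matrix n n ℂ)
    (hρ : IsDensity ρ) (hσ : IsDensity σ) :
    (1/2) * (((mpow hρ.1.1 (1/2) - mpow hσ.1.1 (1/2)) ^ 2).trace.re) ≤
      (1/2) * traceNorm (ρ - σ) := by
  set A := mpow hρ.1.1 (1/2)
  set B := mpow hσ.1.1 (1/2)
  have hA : A.PosSemidef := hρ.1.mpow_half_nonneg.posSemidef
  have hB : B.PosSemidef := hσ.1.mpow_half_nonneg.posSemidef
  have hC : (A - B).IsHermitian := hA.1.sub hB.1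
  set W := cfc (fun x : ℝ => (SignType.sign x : ℝ)) (A - B)
  have key : ((A - B) ^ 2).trace.re ≤ traceNorm (ρ - σ) :=
    calc ((A - B) ^ 2).trace.re
        ≤ (cfc (fun x : ℝ => |x|) (A - B) * (A + B)).trace.re := hA.re_trace_sub_sq_le hB
      _ = (W * (A * A - B * B)).trace.re := by
        rw [trace_mul_mul_self_sub_mul_self hC.cfc_sign_mul_self hC.mul_cfc_sign]
      _ = (W * (ρ - σ)).trace.re := by
        rw [hρ.1.mpow_half_mul_self, hσ.1.mpow_half_mul_self]
      _ ≤ traceNorm (ρ - σ) :=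
        (hρ.1.1.sub hσ.1.1).re_trace_mul_le_traceNorm (cfc_sign_le_one _) (neg_one_le_cfc_sign _)
  linarith
end

section
/- For α ∈ [1/2,1] and density matrices ρ, σ, the Petz–Hellinger divergence satisfies H̄_α(ρ‖σ) := (1/(1-α))(1 - Tr[ρ^α σ^{1-α}]) ≥ (1 - F(ρ,σ)^{2(1-α)})/(1-α) ≥ (1 - (1 - E₁(ρ‖σ)²)^{1-α})/(1-α). -/
/-!
Both inequalities are computed in eigenbases. Writing `ρ = ∑ pᵢ |uᵢ⟩⟨uᵢ|`,
`σ = ∑ qⱼ |vⱼ⟩⟨vⱼ|` and `wᵢⱼ = |⟨uᵢ|vⱼ⟩|²`, one has `Tr[ρ^β σ^γ] = ∑ wᵢⱼ pᵢ^β qⱼ^γ`. Since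
`pᵢ^α qⱼ^(1-α) = (√pᵢ √qⱼ)^t pᵢ^(1-t)` with `t = 2(1-α) ∈ [0,1]` and the weights `wᵢⱼ pᵢ` sum
to `1`, Hölder's inequality gives `Tr[ρ^α σ^(1-α)] ≤ Tr[√ρ √σ]^t ≤ F^t`.

For the Fuchs–van de Graaf inequality let `P` project onto the positive part of `ρ - σ`, so that
`E₁ = a - b` with `a = Tr[Pρ]`, `b = Tr[Pσ]`. Choose a unitary `M` with `F = Tr[M √ρ √σ]` (polar
decomposition) and split `1 = P + (1 - P)` between `√ρ` and `√σ`; Cauchy–Schwarz for the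
Hilbert–Schmidt inner product gives `F ≤ √a √b + √(1-a) √(1-b)`, whose square is at most
`1 - (a - b)²`.
-/

open Matrix BigOperators
open scoped ComplexOrder

open Finset
open scoped InnerProductSpace

lemma norm_sum_mul_le_sqrt_mul_sqrt {ι 𝕜 : Type*} [NormedRing 𝕜] (s : Finset ι) (x y : ι → 𝕜) :
    ‖∑ i ∈ s, x i * y i‖ ≤ √(∑ i ∈ s, ‖x i‖ ^ 2) * √(∑ i ∈ s, ‖y i‖ ^ 2) :=
  calc ‖∑ i ∈ s, x i * y i‖ ≤ ∑ i ∈ s, ‖x i‖ * ‖y i‖ :=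
        (norm_sum_le _ _).trans (sum_le_sum fun _ _ => norm_mul_le _ _)
    _ ≤ _ := Real.sum_mul_le_sqrt_mul_sqrt _ _ _

lemma Real.sum_mul_rpow_mul_rpow_le {ι : Type*} (s : Finset ι) {c x y : ι → ℝ}
    (hc : ∀ i ∈ s, 0 ≤ c i) (hx : ∀ i ∈ s, 0 ≤ x i) (hy : ∀ i ∈ s, 0 ≤ y i) {t : ℝ}
    (ht₀ : 0 ≤ t) (ht₁ : t ≤ 1) :
    ∑ i ∈ s, c i * (x i ^ t * y i ^ (1 - t)) ≤
      (∑ i ∈ s, c i * x i) ^ t * (∑ i ∈ s, c i * y i) ^ (1 - t) := by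
  rcases ht₀.eq_or_lt with rfl | ht₀
  · simp
  rcases ht₁.eq_or_lt with rfl | ht₁
  · simp
  have hcx : ∀ i ∈ s, 0 ≤ c i * x i := fun i hi => mul_nonneg (hc i hi) (hx i hi)
  have hcy : ∀ i ∈ s, 0 ≤ c i * y i := fun i hi => mul_nonneg (hc i hi) (hy i hi)
  convert Real.inner_le_Lp_mul_Lq_of_nonneg s
    (Real.HolderConjugate.inv_inv ht₀ (sub_pos.2 ht₁) (add_sub_cancel t 1))
    (f := fun i => (c i * x i) ^ t) (g := fun i => (c i * y i) ^ (1 - t))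
    (fun i hi => Real.rpow_nonneg (hcx i hi) _) (fun i hi => Real.rpow_nonneg (hcy i hi) _)
    using 2 with i hi
  · rw [Real.mul_rpow (hc i hi) (hx i hi), Real.mul_rpow (hc i hi) (hy i hi)]
    have : c i ^ t * c i ^ (1 - t) = c i := by
      rw [← Real.rpow_add' (hc i hi) (by simp), add_sub_cancel, Real.rpow_one]
    linear_combination (x i ^ t * y i ^ (1 - t)) * this.symm
  · rw [one_div, inv_inv]
    exact congrArg (· ^ t) (sum_congr rfl fun i hi => (Real.rpow_rpow_inv (hcx i hi) ht₀.ne').symm)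
  · rw [one_div, inv_inv]
    exact congrArg (· ^ (1 - t))
      (sum_congr rfl fun i hi => (Real.rpow_rpow_inv (hcy i hi) (sub_pos.2 ht₁).ne').symm)

lemma Real.rpow_mul_rpow_one_sub_eq {a b α : ℝ} (ha : 0 ≤ a) (hb : 0 ≤ b) (hα : α ≠ 0) :
    a ^ α * b ^ (1 - α) =
      (a ^ (1 / 2 : ℝ) * b ^ (1 / 2 : ℝ)) ^ (2 * (1 - α)) * a ^ (1 - 2 * (1 - α)) := by
  rw [Real.mul_rpow (by positivity) (by positivity), ← Real.rpow_mul ha, ← Real.rpow_mul hb,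
    mul_right_comm, ← Real.rpow_add' ha (by ring_nf; exact hα)]
  ring_nf

lemma Real.sqrt_mul_sqrt_add_sqrt_mul_sqrt_sq_le {a b : ℝ} (ha₀ : 0 ≤ a) (ha₁ : a ≤ 1)
    (hb₀ : 0 ≤ b) (hb₁ : b ≤ 1) :
    (√a * √b + √(1 - a) * √(1 - b)) ^ 2 ≤ 1 - (a - b) ^ 2 := by
  nlinarith [Real.sq_sqrt ha₀, Real.sq_sqrt hb₀, Real.sq_sqrt (sub_nonneg.2 ha₁),
    Real.sq_sqrt (sub_nonneg.2 hb₁), Real.sqrt_nonneg a, Real.sqrt_nonneg b,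
    Real.sqrt_nonneg (1 - a), Real.sqrt_nonneg (1 - b),
    sq_nonneg (√a * √(1 - a) - √b * √(1 - b))]

namespace Matrix

lemma re_conjTranspose_mul_self_apply {m n : Type*} [Fintype m] (X : Matrix m n ℂ) (j : n) :
    ((Xᴴ * X) j j).re = ∑ i, ‖X i j‖ ^ 2 := by
  simp [mul_apply, Complex.re_sum, ← Complex.normSq_eq_norm_sq, Complex.normSq_apply]

variable {m n : Type*} [Fintype m] [Fintype n]

lemma re_trace_conjTranspose_mul_self (X : Matrix m n ℂ) :
    (Xᴴ * X).trace.re = ∑ i, ∑ j, ‖X i j‖ ^ 2 := by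
  rw [trace, Complex.re_sum, sum_comm]
  exact sum_congr rfl fun j _ => re_conjTranspose_mul_self_apply X j

lemma norm_trace_mul_le (X : Matrix m n ℂ) (Y : Matrix n m ℂ) :
    ‖(X * Y).trace‖ ≤ √((Xᴴ * X).trace.re) * √((Yᴴ * Y).trace.re) := by
  rw [re_trace_conjTranspose_mul_self, re_trace_conjTranspose_mul_self, sum_comm (γ := n),
    ← Fintype.sum_prod_type', ← Fintype.sum_prod_type']
  simpa only [trace, diag_apply, mul_apply, Fintype.sum_prod_type] using
    norm_sum_mul_le_sqrt_mul_sqrt univ (fun p : m × n => X p.1 p.2) (fun p => Y p.2 p.1)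

variable [DecidableEq n]

lemma sum_norm_sq_apply_of_mem_unitaryGroup {W : Matrix n n ℂ} (hW : W ∈ unitaryGroup n ℂ)
    (i : n) : ∑ j, ‖W i j‖ ^ 2 = 1 := by
  have h := re_conjTranspose_mul_self_apply Wᴴ i
  simp only [conjTranspose_conjTranspose, conjTranspose_apply, norm_star] at h
  rw [← h, ← star_eq_conjTranspose, mem_unitaryGroup_iff.mp hW, one_apply_eq, Complex.one_re]

lemma re_trace_mul_le_sum_sqrt {W : Matrix n n ℂ} (hW : W ∈ unitaryGroup n ℂ)
    (C : Matrix n n ℂ) : (W * C).trace.re ≤ ∑ i, √(∑ k, ‖C k i‖ ^ 2) := by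
  rw [trace, Complex.re_sum]
  refine sum_le_sum fun i _ => ?_
  calc ((W * C).diag i).re ≤ ‖∑ k, W i k * C k i‖ := Complex.re_le_norm _
    _ ≤ √(∑ k, ‖W i k‖ ^ 2) * √(∑ k, ‖C k i‖ ^ 2) := norm_sum_mul_le_sqrt_mul_sqrt _ _ _
    _ = √(∑ k, ‖C k i‖ ^ 2) := by
      rw [sum_norm_sq_apply_of_mem_unitaryGroup hW, Real.sqrt_one, one_mul]

/-- `W = Qᴴ`, where the columns of `Q` are an orthonormal basis extending the normalized nonzero
(and mutually orthogonal) columns of `C`. -/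
lemma exists_mem_unitaryGroup_trace_mul_eq {C : Matrix n n ℂ} (hC : (Cᴴ * C).IsDiag) :
    ∃ W ∈ unitaryGroup n ℂ, (W * C).trace = ∑ i, (√(∑ k, ‖C k i‖ ^ 2) : ℂ) := by
  let c : n → EuclideanSpace ℂ n := fun i => WithLp.toLp 2 fun k => C k i
  have hc_norm : ∀ i, ‖c i‖ = √(∑ k, ‖C k i‖ ^ 2) := fun i => EuclideanSpace.norm_eq _
  have hc_inner : ∀ i j, ⟪c i, c j⟫_ℂ = (Cᴴ * C) i j := fun i j => by
    simp [c, PiLp.inner_apply, mul_apply, mul_comm]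
  let s : Set n := {i | c i ≠ 0}
  let e : n → EuclideanSpace ℂ n := fun i => (‖c i‖⁻¹ : ℂ) • c i
  have he : Orthonormal ℂ (s.domRestrict e) := by
    refine ⟨fun i => norm_smul_inv_norm i.2, fun i j hij => ?_⟩
    simp only [Set.domRestrict_apply, e, inner_smul_left, inner_smul_right, hc_inner,
      hC (Subtype.coe_ne_coe.mpr hij), mul_zero]
  obtain ⟨b, hb⟩ := he.exists_orthonormalBasis_extension_of_card_eq finrank_euclideanSpace
  let Q := (EuclideanSpace.basisFun n ℂ).toBasis.toMatrix b
  have hQ : Q ∈ unitaryGroup n ℂ :=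
    (EuclideanSpace.basisFun n ℂ).toMatrix_orthonormalBasis_mem_unitary b
  refine ⟨star Q, Unitary.star_mem hQ, sum_congr rfl fun i _ => ?_⟩
  have hdiag : (star Q * C) i i = ⟪b i, c i⟫_ℂ := by
    simp [Q, c, PiLp.inner_apply, mul_apply, mul_comm, Module.Basis.toMatrix_apply]
  rw [diag_apply, hdiag, ← hc_norm]
  by_cases hi : c i = 0
  · simp [hi]
  · have h : ‖c i‖ ≠ 0 := norm_ne_zero_iff.mpr hi
    rw [hb i hi, inner_smul_left, inner_self_eq_norm_sq_to_K, map_inv₀, Complex.conj_ofReal]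
    field_simp
    rfl

lemma IsHermitian.eq_conj_diagonal {A : Matrix n n ℂ} (hA : A.IsHermitian) :
    A = hA.eigenvectorUnitary * diagonal (fun i => (hA.eigenvalues i : ℂ)) *
      star (hA.eigenvectorUnitary : Matrix n n ℂ) :=
  hA.spectral_theorem

lemma IsHermitian.star_eigenvectorUnitary_mul_mul_eigenvectorUnitary {A : Matrix n n ℂ}
    (hA : A.IsHermitian) :
    star (hA.eigenvectorUnitary : Matrix n n ℂ) * A * hA.eigenvectorUnitary =
      diagonal (fun i => (hA.eigenvalues i : ℂ)) := by
  simpa [Unitary.conjStarAlgAut_apply, Function.comp_def] using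
    hA.conjStarAlgAut_star_eigenvectorUnitary

lemma conjTranspose_mul_self_mul_eigenvectorUnitary (A : Matrix n n ℂ) :
    let V : Matrix n n ℂ := (posSemidef_conjTranspose_mul_self A).1.eigenvectorUnitary
    (A * V)ᴴ * (A * V) =
      diagonal (fun i => ((posSemidef_conjTranspose_mul_self A).1.eigenvalues i : ℂ)) := by
  intro V
  rw [← (posSemidef_conjTranspose_mul_self A).1.star_eigenvectorUnitary_mul_mul_eigenvectorUnitary]
  simp only [conjTranspose_mul, star_eq_conjTranspose, Matrix.mul_assoc, V]

lemma conj_diagonal_mul_conj_diagonal {U : Matrix n n ℂ} (hU : U ∈ unitaryGroup n ℂ)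
    (f g : n → ℝ) :
    U * diagonal (fun i => (f i : ℂ)) * star U * (U * diagonal (fun i => (g i : ℂ)) * star U) =
      U * diagonal (fun i => ((f i * g i : ℝ) : ℂ)) * star U := by
  simp only [Matrix.mul_assoc]
  rw [← Matrix.mul_assoc (star U), mem_unitaryGroup_iff'.mp hU, Matrix.one_mul,
    ← Matrix.mul_assoc (diagonal _), diagonal_mul_diagonal]
  push_cast
  rfl

lemma trace_conj_diagonal {U : Matrix n n ℂ} (hU : U ∈ unitaryGroup n ℂ) (f : n → ℝ) :
    (U * diagonal (fun i => (f i : ℂ)) * star U).trace = ∑ i, (f i : ℂ) := by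
  rw [trace_mul_comm, ← Matrix.mul_assoc, mem_unitaryGroup_iff'.mp hU, Matrix.one_mul,
    trace_diagonal]

lemma conjTranspose_conj_diagonal (U : Matrix n n ℂ) (f : n → ℝ) :
    (U * diagonal (fun i => (f i : ℂ)) * star U)ᴴ = U * diagonal (fun i => (f i : ℂ)) * star U := by
  simp [Matrix.mul_assoc, star_eq_conjTranspose, diagonal_conjTranspose, Pi.star_def]

lemma trace_conj_diagonal_mul_conj_diagonal (U V : Matrix n n ℂ) (f g : n → ℝ) :
    (U * diagonal (fun i => (f i : ℂ)) * star U *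
        (V * diagonal (fun j => (g j : ℂ)) * star V)).trace =
      ((∑ i, ∑ j, f i * g j * ‖(star U * V) i j‖ ^ 2 : ℝ) : ℂ) := by
  have h : U * diagonal (fun i => (f i : ℂ)) * star U *
        (V * diagonal (fun j => (g j : ℂ)) * star V) =
      U * (diagonal (fun i => (f i : ℂ)) * (star U * V) * diagonal (fun j => (g j : ℂ)) *
        star V) := by
    simp only [Matrix.mul_assoc]
  have hW : star V * U = star (star U * V) := by rw [star_mul, star_star]
  rw [h, trace_mul_comm, Matrix.mul_assoc _ (star V), hW]
  generalize star U * V = W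
  push_cast
  refine sum_congr rfl fun i _ => ?_
  rw [diag_apply, mul_apply]
  refine sum_congr rfl fun j _ => ?_
  rw [mul_diagonal, diagonal_mul, star_apply, ← Complex.mul_conj', RCLike.star_def]
  ring

end Matrix

open Matrix

section TraceNorm

variable {n : Type*} [Fintype n] [DecidableEq n]

lemma traceNorm_nonneg (A : Matrix n n ℂ) : 0 ≤ traceNorm A :=
  sum_nonneg fun _ _ => Real.sqrt_nonneg _

lemma traceNorm_eq_sum_sqrt (A : Matrix n n ℂ) :
    let V : Matrix n n ℂ := (posSemidef_conjTranspose_mul_self A).1.eigenvectorUnitary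
    traceNorm A = ∑ i, √(∑ k, ‖(A * V) k i‖ ^ 2) := by
  intro V
  refine sum_congr rfl fun i _ => ?_
  rw [← re_conjTranspose_mul_self_apply, conjTranspose_mul_self_mul_eigenvectorUnitary,
    diagonal_apply_eq, Complex.ofReal_re]

lemma re_trace_mul_le_traceNorm {M : Matrix n n ℂ} (hM : M ∈ unitaryGroup n ℂ)
    (A : Matrix n n ℂ) : (M * A).trace.re ≤ traceNorm A := by
  set V : Matrix n n ℂ :=
    ((posSemidef_conjTranspose_mul_self A).1.eigenvectorUnitary : Matrix n n ℂ)
  have hV : V ∈ unitaryGroup n ℂ := Subtype.prop _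
  have h : (star V * M * (A * V)).trace = (M * A).trace := by
    rw [← Matrix.mul_assoc, trace_mul_comm _ V, ← Matrix.mul_assoc, ← Matrix.mul_assoc,
      mem_unitaryGroup_iff.mp hV, Matrix.one_mul]
  rw [← h, traceNorm_eq_sum_sqrt]
  exact re_trace_mul_le_sum_sqrt (mul_mem (Unitary.star_mem hV) hM) _

lemma re_trace_le_traceNorm (A : Matrix n n ℂ) : A.trace.re ≤ traceNorm A := by
  simpa using re_trace_mul_le_traceNorm (one_mem _) A

lemma exists_mem_unitaryGroup_trace_mul_eq_traceNorm (A : Matrix n n ℂ) :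
    ∃ M ∈ unitaryGroup n ℂ, (M * A).trace = traceNorm A := by
  set V : Matrix n n ℂ :=
    ((posSemidef_conjTranspose_mul_self A).1.eigenvectorUnitary : Matrix n n ℂ)
  obtain ⟨W, hW, hWA⟩ := exists_mem_unitaryGroup_trace_mul_eq (C := A * V) <| by
    rw [conjTranspose_mul_self_mul_eigenvectorUnitary]
    exact isDiag_diagonal _
  refine ⟨V * W, mul_mem (Subtype.prop _) hW, ?_⟩
  rw [Matrix.mul_assoc, trace_mul_comm, Matrix.mul_assoc, hWA, traceNorm_eq_sum_sqrt]
  push_cast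
  rfl

end TraceNorm

section Mpow

variable {n : Type*} [Fintype n] [DecidableEq n]

lemma conjTranspose_mpow {ρ : Matrix n n ℂ} (hρ : ρ.IsHermitian) (α : ℝ) :
    (mpow hρ α)ᴴ = mpow hρ α :=
  conjTranspose_conj_diagonal _ _

lemma mpow_half_mul_mpow_half {ρ : Matrix n n ℂ} (hρ : ρ.PosSemidef) :
    mpow hρ.1 (1 / 2) * mpow hρ.1 (1 / 2) = ρ := by
  rw [mpow, conj_diagonal_mul_conj_diagonal (Subtype.prop _)]
  conv_rhs => rw [hρ.1.eq_conj_diagonal]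
  congr 3
  funext i
  rw [← Real.rpow_add' (hρ.eigenvalues_nonneg i) (by norm_num)]
  norm_num

lemma trace_mpow_mul_mpow {ρ σ : Matrix n n ℂ} (hρ : ρ.IsHermitian) (hσ : σ.IsHermitian)
    (β γ : ℝ) :
    (mpow hρ β * mpow hσ γ).trace =
      ((∑ i, ∑ j, hρ.eigenvalues i ^ β * hσ.eigenvalues j ^ γ *
        ‖(star (hρ.eigenvectorUnitary : Matrix n n ℂ) * hσ.eigenvectorUnitary) i j‖ ^ 2 : ℝ) :
          ℂ) :=
  trace_conj_diagonal_mul_conj_diagonal _ _ _ _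

lemma re_trace_mpow_mul_mpow_nonneg {ρ σ : Matrix n n ℂ} (hρ : ρ.PosSemidef)
    (hσ : σ.PosSemidef) (β γ : ℝ) : 0 ≤ (mpow hρ.1 β * mpow hσ.1 γ).trace.re := by
  rw [trace_mpow_mul_mpow, Complex.ofReal_re]
  exact sum_nonneg fun i _ => sum_nonneg fun j _ => mul_nonneg (mul_nonneg
    (Real.rpow_nonneg (hρ.eigenvalues_nonneg i) _) (Real.rpow_nonneg (hσ.eigenvalues_nonneg j) _))
    (sq_nonneg _)

lemma IsDensity.sum_eigenvalues {ρ : Matrix n n ℂ} (hρ : IsDensity ρ) :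
    ∑ i, hρ.1.1.eigenvalues i = 1 := by
  simpa [hρ.2] using congrArg Complex.re hρ.1.1.trace_eq_sum_eigenvalues.symm

lemma re_trace_mpow_mul_mpow_le {ρ σ : Matrix n n ℂ} (hρ : IsDensity ρ) (hσ : σ.PosSemidef)
    {α : ℝ} (hα₁ : 1 / 2 ≤ α) (hα₂ : α ≤ 1) :
    (mpow hρ.1.1 α * mpow hσ.1 (1 - α)).trace.re ≤
      (mpow hρ.1.1 (1 / 2) * mpow hσ.1 (1 / 2)).trace.re ^ (2 * (1 - α)) := by
  set p := hρ.1.1.eigenvalues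
  set q := hσ.1.eigenvalues
  set W := star (hρ.1.1.eigenvectorUnitary : Matrix n n ℂ) * hσ.1.eigenvectorUnitary
  have hW : W ∈ unitaryGroup n ℂ := mul_mem (Unitary.star_mem (Subtype.prop _)) (Subtype.prop _)
  have hp : ∀ i, 0 ≤ p i := hρ.1.eigenvalues_nonneg
  have hq : ∀ j, 0 ≤ q j := hσ.eigenvalues_nonneg
  have hweight : ∑ ij : n × n, ‖W ij.1 ij.2‖ ^ 2 * p ij.1 = 1 := by
    simp only [Fintype.sum_prod_type, ← sum_mul, sum_norm_sq_apply_of_mem_unitaryGroup hW,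
      one_mul, p, hρ.sum_eigenvalues]
  have holder := Real.sum_mul_rpow_mul_rpow_le univ (c := fun ij : n × n => ‖W ij.1 ij.2‖ ^ 2)
    (x := fun ij => p ij.1 ^ (1 / 2 : ℝ) * q ij.2 ^ (1 / 2 : ℝ)) (y := fun ij => p ij.1)
    (fun _ _ => by positivity) (fun ij _ => by have := hp ij.1; have := hq ij.2; positivity)
    (fun ij _ => hp ij.1) (t := 2 * (1 - α)) (by linarith) (by linarith)
  rw [hweight, Real.one_rpow, mul_one] at holder
  rw [trace_mpow_mul_mpow, trace_mpow_mul_mpow, Complex.ofReal_re, Complex.ofReal_re]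
  convert holder using 1
  · rw [← Fintype.sum_prod_type']
    refine sum_congr rfl fun ij _ => ?_
    rw [Real.rpow_mul_rpow_one_sub_eq (hp _) (hq _) (by linarith)]
    ring
  · rw [← Fintype.sum_prod_type']
    exact congrArg (· ^ _) (sum_congr rfl fun ij _ => by ring)

end Mpow

section Fidelity

variable {n : Type*} [Fintype n] [DecidableEq n]

lemma fid_nonneg {ρ σ : Matrix n n ℂ} (hρ : ρ.IsHermitian) (hσ : σ.IsHermitian) :
    0 ≤ fid hρ hσ :=
  traceNorm_nonneg _

lemma re_trace_mpow_mul_mpow_le_fid_rpow {ρ σ : Matrix n n ℂ} (hρ : IsDensity ρ)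
    (hσ : σ.PosSemidef) {α : ℝ} (hα₁ : 1 / 2 ≤ α) (hα₂ : α ≤ 1) :
    (mpow hρ.1.1 α * mpow hσ.1 (1 - α)).trace.re ≤ fid hρ.1.1 hσ.1 ^ (2 * (1 - α)) :=
  (re_trace_mpow_mul_mpow_le hρ hσ hα₁ hα₂).trans <|
    Real.rpow_le_rpow (re_trace_mpow_mul_mpow_nonneg hρ.1 hσ _ _) (re_trace_le_traceNorm _)
      (by linarith)

omit [DecidableEq n] in
lemma re_trace_mul_nonneg_of_isStarProjection {P ρ : Matrix n n ℂ} (hP : IsStarProjection P)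
    (hρ : ρ.PosSemidef) : 0 ≤ (P * ρ).trace.re := by
  have h := (hρ.conjTranspose_mul_mul_same P).trace_nonneg
  rw [← star_eq_conjTranspose, hP.isSelfAdjoint.star_eq, trace_mul_comm, ← Matrix.mul_assoc,
    hP.isIdempotentElem.eq] at h
  exact (Complex.nonneg_iff.mp h).1

lemma re_trace_mul_mul_mul_le {M R P S : Matrix n n ℂ} (hM : M ∈ unitaryGroup n ℂ)
    (hR : Rᴴ = R) (hP : IsStarProjection P) (hS : Sᴴ = S) :
    (M * (R * P * S)).trace.re ≤ √(P * (R * R)).trace.re * √(P * (S * S)).trace.re := by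
  have hPP : P * P = P := hP.isIdempotentElem.eq
  have hPH : Pᴴ = P := hP.isSelfAdjoint.star_eq
  have hsplit : M * (R * P * S) = M * R * P * (P * S) := by
    simp only [Matrix.mul_assoc]
    rw [← Matrix.mul_assoc P P, hPP]
  have hX : (M * R * P)ᴴ * (M * R * P) = P * (R * R) * P := by
    simp only [conjTranspose_mul, hR, hPH, Matrix.mul_assoc]
    rw [← Matrix.mul_assoc Mᴴ, ← star_eq_conjTranspose, mem_unitaryGroup_iff'.mp hM,
      Matrix.one_mul]
  have hY : (P * S)ᴴ * (P * S) = S * P * S := by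
    rw [conjTranspose_mul, hPH, hS, Matrix.mul_assoc, ← Matrix.mul_assoc P, hPP,
      Matrix.mul_assoc]
  rw [hsplit]
  refine (Complex.re_le_norm _).trans ((norm_trace_mul_le _ _).trans_eq ?_)
  rw [hX, hY, trace_mul_comm _ P, ← Matrix.mul_assoc P P, hPP, trace_mul_comm (S * P) S,
    ← Matrix.mul_assoc S S P, trace_mul_comm (S * S) P]

lemma fid_le_of_isStarProjection {ρ σ P : Matrix n n ℂ} (hρ : ρ.PosSemidef)
    (hσ : σ.PosSemidef) (hP : IsStarProjection P) :
    fid hρ.1 hσ.1 ≤ √(P * ρ).trace.re * √(P * σ).trace.re +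
      √((1 - P) * ρ).trace.re * √((1 - P) * σ).trace.re := by
  obtain ⟨M, hM, hMF⟩ := exists_mem_unitaryGroup_trace_mul_eq_traceNorm
    (mpow hρ.1 (1 / 2) * mpow hσ.1 (1 / 2))
  have hR := conjTranspose_mpow hρ.1 (1 / 2)
  have hS := conjTranspose_mpow hσ.1 (1 / 2)
  have hsplit : M * (mpow hρ.1 (1 / 2) * mpow hσ.1 (1 / 2)) =
      M * (mpow hρ.1 (1 / 2) * P * mpow hσ.1 (1 / 2)) +
        M * (mpow hρ.1 (1 / 2) * (1 - P) * mpow hσ.1 (1 / 2)) := by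
    rw [← mul_add, ← add_mul, ← mul_add, add_sub_cancel, Matrix.mul_one]
  have h := add_le_add (re_trace_mul_mul_mul_le hM hR hP hS)
    (re_trace_mul_mul_mul_le hM hR hP.one_sub hS)
  rwa [mpow_half_mul_mpow_half hρ, mpow_half_mul_mpow_half hσ, ← Complex.add_re, ← trace_add,
    ← hsplit, hMF, Complex.ofReal_re] at h

noncomputable def posPartProj {A : Matrix n n ℂ} (hA : A.IsHermitian) : Matrix n n ℂ :=
  hA.eigenvectorUnitary * diagonal (fun i => ((if 0 < hA.eigenvalues i then 1 else 0 : ℝ) : ℂ)) *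
    star (hA.eigenvectorUnitary : Matrix n n ℂ)

lemma isStarProjection_posPartProj {A : Matrix n n ℂ} (hA : A.IsHermitian) :
    IsStarProjection (posPartProj hA) where
  isIdempotentElem := by
    rw [IsIdempotentElem, posPartProj, conj_diagonal_mul_conj_diagonal (Subtype.prop _)]
    congr 3
    funext i
    split_ifs <;> simp
  isSelfAdjoint := conjTranspose_conj_diagonal _ _

lemma re_trace_posPartProj_mul {A : Matrix n n ℂ} (hA : A.IsHermitian) :
    (posPartProj hA * A).trace.re = trPos A := by
  have h : posPartProj hA * A = hA.eigenvectorUnitary *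
      diagonal (fun i => (((if 0 < hA.eigenvalues i then 1 else 0) * hA.eigenvalues i : ℝ) : ℂ)) *
      star (hA.eigenvectorUnitary : Matrix n n ℂ) := by
    conv_lhs => arg 2; rw [hA.eq_conj_diagonal]
    exact conj_diagonal_mul_conj_diagonal (Subtype.prop _) _ _
  rw [h, trace_conj_diagonal (Subtype.prop _), trPos, dif_pos hA, ← Complex.ofReal_sum,
    Complex.ofReal_re]
  refine sum_congr rfl fun i _ => ?_
  split_ifs with hi
  · simp [hi.le]
  · simp [not_lt.mp hi]

lemma fid_sq_le_one_sub_Egamma_sq {ρ σ : Matrix n n ℂ} (hρ : IsDensity ρ) (hσ : IsDensity σ) :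
    fid hρ.1.1 hσ.1.1 ^ 2 ≤ 1 - Egamma 1 ρ σ ^ 2 := by
  have hX : (ρ - σ).IsHermitian := hρ.1.1.sub hσ.1.1
  have hP := isStarProjection_posPartProj hX
  set P := posPartProj hX
  have hcompl : ∀ τ, IsDensity τ → ((1 - P) * τ).trace.re = 1 - (P * τ).trace.re :=
    fun τ hτ => by
      rw [Matrix.sub_mul, Matrix.one_mul, trace_sub, Complex.sub_re, hτ.2, Complex.one_re]
  have hE : Egamma 1 ρ σ = (P * ρ).trace.re - (P * σ).trace.re := by
    rw [Egamma, Complex.ofReal_one, one_smul, ← re_trace_posPartProj_mul hX, Matrix.mul_sub,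
      trace_sub, Complex.sub_re]
  have hF := fid_le_of_isStarProjection hρ.1 hσ.1 hP
  have ha := re_trace_mul_nonneg_of_isStarProjection hP.one_sub hρ.1
  have hb := re_trace_mul_nonneg_of_isStarProjection hP.one_sub hσ.1
  simp only [hcompl ρ hρ, hcompl σ hσ] at hF ha hb
  rw [hE]
  exact (pow_le_pow_left₀ (fid_nonneg _ _) hF 2).trans
    (Real.sqrt_mul_sqrt_add_sqrt_mul_sqrt_sq_le
      (re_trace_mul_nonneg_of_isStarProjection hP hρ.1) (by linarith)
      (re_trace_mul_nonneg_of_isStarProjection hP hσ.1) (by linarith))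

end Fidelity

/-- For `α ∈ [1/2,1]`, the Petz–Hellinger divergence satisfies
`H̄_α(ρ‖σ) = (1/(1-α))(1 - Tr[ρ^α σ^{1-α}]) ≥ (1 - F(ρ,σ)^{2(1-α)})/(1-α)
≥ (1 - (1 - E₁(ρ‖σ)²)^{1-α})/(1-α)`. -/
theorem stmt_13 {n : Type*} [Fintype n] [DecidableEq n] (ρ σ : Matrix n n ℂ)
    (hρ : IsDensity ρ) (hσ : IsDensity σ)
    (α : ℝ) (hα : α ∈ Set.Icc (1/2 : ℝ) 1) :
    (1 / (1 - α)) * (1 - (mpow hρ.1.1 α * mpow hσ.1.1 (1 - α)).trace.re) ≥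
        (1 - fid hρ.1.1 hσ.1.1 ^ (2 * (1 - α))) / (1 - α) ∧
      (1 - fid hρ.1.1 hσ.1.1 ^ (2 * (1 - α))) / (1 - α) ≥
        (1 - (1 - Egamma 1 ρ σ ^ 2) ^ (1 - α)) / (1 - α) := by
  obtain ⟨hα₁, hα₂⟩ := hα
  have hα : 0 ≤ 1 - α := sub_nonneg.2 hα₂
  have hFE : fid hρ.1.1 hσ.1.1 ^ (2 * (1 - α)) ≤ (1 - Egamma 1 ρ σ ^ 2) ^ (1 - α) := by
    rw [Real.rpow_mul (fid_nonneg _ _), Real.rpow_two]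
    exact Real.rpow_le_rpow (sq_nonneg _) (fid_sq_le_one_sub_Egamma_sq hρ hσ) hα
  -- at `α = 1` both sides of each inequality are `0`, as `x / 0 = 0`
  constructor
  · rw [one_div_mul_eq_div]
    exact div_le_div_of_nonneg_right
      (sub_le_sub_left (re_trace_mpow_mul_mpow_le_fid_rpow hρ hσ.1 hα₁ hα₂) 1) hα
  · exact div_le_div_of_nonneg_right (sub_le_sub_left hFE 1) hα
end

section
/- For ε > 0, the quantity 2·((e^{ε/2}-1)²/(e^ε-1))·(e^{-ε}(e^ε-1)²/(e^ε - e^{-ε})) equals 2·(e^{ε/2}-1)²(1-e^{-ε})/(e^ε - e^{-ε}), and setting t equal to this quantity, one has t·(1 - t/4) ≤ ((e^ε-1)/(e^ε+1))². -/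
open Real

/-- For `ε > 0`, the quantity
`2·((e^{ε/2}-1)²/(e^ε-1))·(e^{-ε}(e^ε-1)²/(e^ε - e^{-ε}))`
equals `2·(e^{ε/2}-1)²(1-e^{-ε})/(e^ε - e^{-ε})`, and letting `t` be this quantity,
`t·(1 - t/4) ≤ ((e^ε-1)/(e^ε+1))²`. -/
theorem stmt_18 (ε : ℝ) (hε : 0 < ε) (t : ℝ)
    (ht : t = 2 * ((Real.exp (ε/2) - 1)^2 / (Real.exp ε - 1)) *
      (Real.exp (-ε) * (Real.exp ε - 1)^2 / (Real.exp ε - Real.exp (-ε)))) :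
    t = 2 * (Real.exp (ε/2) - 1)^2 * (1 - Real.exp (-ε)) / (Real.exp ε - Real.exp (-ε)) ∧
      t * (1 - t / 4) ≤ ((Real.exp ε - 1) / (Real.exp ε + 1))^2 := by
  set u := Real.exp (ε/2) with hu
  have hu1 : 1 < u := by
    rw [hu]; exact Real.one_lt_exp_iff.mpr (by linarith)
  have he : Real.exp ε = u^2 := by
    rw [hu, sq, ← Real.exp_add]; ring_nf
  have hne : Real.exp (-ε) = 1 / u^2 := by
    rw [Real.exp_neg, he]; ring
  have hu0 : 0 < u := by linarith
  have h1 : (0:ℝ) < u^2 - 1 := by nlinarith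
  have h4 : (0:ℝ) < u^4 - 1 := by nlinarith
  have h2 : (0:ℝ) < u^2 - 1/u^2 := by
    have : 1/u^2 < 1 := by
      rw [div_lt_one (by positivity)]; nlinarith
    nlinarith
  have h1' : u^2 - 1 ≠ 0 := ne_of_gt h1
  have h2' : u^2 - 1/u^2 ≠ 0 := ne_of_gt h2
  have hu' : u ≠ 0 := ne_of_gt hu0
  have ht' : t = 2 * (u - 1)^2 / (u^2 + 1) := by
    rw [ht, he, hne]
    have h4'' : u ^ 2 * u ^ 2 - (1:ℝ) ≠ 0 := by nlinarith
    field_simp [h4'']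
    ring
  refine ⟨?_, ?_⟩
  · rw [ht', he, hne]
    have h4'' : u ^ 2 * u ^ 2 - (1:ℝ) ≠ 0 := by nlinarith
    field_simp [h4'']
    ring
  · rw [ht', he]
    have hL : 2 * (u - 1)^2 / (u^2 + 1) * (1 - 2 * (u - 1)^2 / (u^2 + 1) / 4)
        = ((u-1)^2 * (2*(u^2+1) - (u-1)^2)) / ((u^2+1)^2) := by
      field_simp; ring
    rw [hL, div_pow, div_le_div_iff₀ (by positivity) (by positivity)]
    nlinarith [sq_nonneg (u-1), sq_nonneg (u+1), sq_nonneg ((u-1)*(u+1)), sq_nonneg u, pow_pos hu0 2, pow_pos hu0 4]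
end

section
/- Let D_∞(ρ‖σ) denote the max-relative entropy and suppose D_∞(ρ‖σ) ≤ ε and D_∞(σ‖ρ) ≤ ε. Then the convexity bound E_γ(ρ‖σ) ≤ ((e^ε - γ)/(e^ε - 1))·E₁(ρ‖σ) holds for all γ ∈ [1, e^ε], and consequently H_{1/2}(ρ‖σ) = (1/2)∫₁^∞ γ^{-3/2}(E_γ(ρ‖σ) + E_γ(σ‖ρ)) dγ ≤ 2·((e^{ε/2}-1)²/(e^ε-1))·E₁(ρ‖σ). -/
/-! `trPos X` is the maximum of `Re Tr (P X)` over `0 ≤ P ≤ 1`, attained at the spectral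
projection onto the nonnegative eigenvalues of `X`; hence `trPos` is sublinear on Hermitian
matrices and `γ ↦ E_γ(ρ‖σ)` is convex. Since `e^ε σ - ρ ≥ 0`, it vanishes at `γ = e^ε`, so on
`[1, e^ε]` it lies below the chord from `E₁(ρ‖σ)` to `0`. The same holds for `E_γ(σ‖ρ)`, whose
value at `1` is `E₁(ρ‖σ)` because `Tr ρ = Tr σ`. Integrating the chord against `γ^{-3/2}` gives
the bound on `H_{1/2}`. -/

open Matrix BigOperators
open scoped ComplexOrder

namespace Matrix

variable {n : Type*} [Fintype n] [DecidableEq n]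

lemma IsHermitian.trace_mul_eq_sum {X : Matrix n n ℂ} (hX : X.IsHermitian) (P : Matrix n n ℂ) :
    (P * X).trace = ∑ i,
      (star (hX.eigenvectorUnitary : Matrix n n ℂ) * P * hX.eigenvectorUnitary) i i *
        hX.eigenvalues i := by
  set U : Matrix n n ℂ := (hX.eigenvectorUnitary : Matrix n n ℂ)
  conv_lhs => rw [hX.spectral_theorem, Unitary.conjStarAlgAut_apply]
  rw [← Matrix.mul_assoc, ← Matrix.mul_assoc, Matrix.trace_mul_cycle, ← Matrix.mul_assoc]
  simp [Matrix.trace, Matrix.mul_diagonal, U]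

end Matrix

section HockeyStick

variable {n : Type*} [Fintype n] [DecidableEq n]

lemma trPos_nonneg (X : Matrix n n ℂ) : 0 ≤ trPos X := by
  unfold trPos
  split
  · exact Finset.sum_nonneg fun i _ => le_max_right _ _
  · exact le_rfl

lemma re_trace_mul_le_trPos {X P : Matrix n n ℂ} (hX : X.IsHermitian)
    (hP : P.PosSemidef) (hP1 : (1 - P).PosSemidef) : (P * X).trace.re ≤ trPos X := by
  set U : Matrix n n ℂ := (hX.eigenvectorUnitary : Matrix n n ℂ)
  set Q := star U * P * U
  have hQ : Q.PosSemidef := hP.conjTranspose_mul_mul_same U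
  have hQ1 : (1 - Q).PosSemidef := by
    have h := hP1.conjTranspose_mul_mul_same U
    rwa [Matrix.mul_sub, Matrix.sub_mul, Matrix.mul_one, ← star_eq_conjTranspose,
      Matrix.mem_unitaryGroup_iff'.mp hX.eigenvectorUnitary.2] at h
  rw [hX.trace_mul_eq_sum, Complex.re_sum, trPos, dif_pos hX]
  refine Finset.sum_le_sum fun i _ => ?_
  have hq0 : 0 ≤ (Q i i).re := (Complex.le_def.mp hQ.diag_nonneg).1
  have hq1 : (Q i i).re ≤ 1 := by
    simpa using (Complex.le_def.mp hQ1.diag_nonneg).1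
  rw [Complex.re_mul_ofReal]
  rcases le_total 0 (hX.eigenvalues i) with h | h
  · nlinarith [le_max_left (hX.eigenvalues i) 0]
  · nlinarith [le_max_right (hX.eigenvalues i) 0]

lemma exists_re_trace_mul_eq_trPos {X : Matrix n n ℂ} (hX : X.IsHermitian) :
    ∃ P : Matrix n n ℂ, P.PosSemidef ∧ (1 - P).PosSemidef ∧ (P * X).trace.re = trPos X := by
  set U : Matrix n n ℂ := (hX.eigenvectorUnitary : Matrix n n ℂ)
  have hUU : star U * U = 1 := Matrix.mem_unitaryGroup_iff'.mp hX.eigenvectorUnitary.2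
  have hUU' : U * star U = 1 := Matrix.mem_unitaryGroup_iff.mp hX.eigenvectorUnitary.2
  set d : n → ℂ := fun i => if 0 ≤ hX.eigenvalues i then 1 else 0
  have conj_diagonal (e : n → ℂ) (he : ∀ i, 0 ≤ e i) :
      (U * diagonal e * star U).PosSemidef := by
    simpa [Matrix.star_eq_conjTranspose] using
      (posSemidef_diagonal_iff.mpr he).mul_mul_conjTranspose_same U
  refine ⟨U * diagonal d * star U, conj_diagonal d fun i => ?_, ?_, ?_⟩
  · by_cases h : 0 ≤ hX.eigenvalues i <;> simp [d, h]
  · have h1 : 1 - U * diagonal d * star U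
        = U * diagonal (fun i => 1 - d i) * star U := by
      rw [← diagonal_one, ← diagonal_sub, diagonal_one, Matrix.mul_sub, Matrix.sub_mul,
        Matrix.mul_one, hUU']
    rw [h1]
    exact conj_diagonal _ fun i => by by_cases h : 0 ≤ hX.eigenvalues i <;> simp [d, h]
  · have hQ : star U * (U * diagonal d * star U) * U = diagonal d := by
      simp only [← Matrix.mul_assoc, hUU, Matrix.one_mul]
      rw [Matrix.mul_assoc, hUU, Matrix.mul_one]
    rw [hX.trace_mul_eq_sum, hQ, Complex.re_sum, trPos, dif_pos hX]
    refine Finset.sum_congr rfl fun i _ => ?_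
    by_cases h : 0 ≤ hX.eigenvalues i
    · simp [d, h]
    · simp [d, h, le_of_not_ge h]

lemma re_trace_mul_nonneg {P A : Matrix n n ℂ} (hP : P.PosSemidef) (hA : A.PosSemidef) :
    0 ≤ (P * A).trace.re := by
  rw [hA.1.trace_mul_eq_sum, Complex.re_sum]
  refine Finset.sum_nonneg fun i _ => ?_
  rw [Complex.re_mul_ofReal]
  exact mul_nonneg (Complex.le_def.mp (hP.conjTranspose_mul_mul_same _).diag_nonneg).1
    (hA.eigenvalues_nonneg i)

lemma trPos_eq_zero_of_posSemidef_neg {X : Matrix n n ℂ} (h : (-X).PosSemidef) :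
    trPos X = 0 := by
  have hX : X.IsHermitian := by simpa using h.1.neg
  obtain ⟨P, hP, -, hPX⟩ := exists_re_trace_mul_eq_trPos hX
  have hneg := re_trace_mul_nonneg hP h
  rw [Matrix.mul_neg, trace_neg, Complex.neg_re] at hneg
  linarith [trPos_nonneg X]

lemma trPos_smul_add_smul_le {X Y : Matrix n n ℂ} (hX : X.IsHermitian) (hY : Y.IsHermitian)
    {a b : ℝ} (ha : 0 ≤ a) (hb : 0 ≤ b) :
    trPos ((a : ℂ) • X + (b : ℂ) • Y) ≤ a * trPos X + b * trPos Y := by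
  have hZ : ((a : ℂ) • X + (b : ℂ) • Y).IsHermitian :=
    (hX.smul (Complex.conj_ofReal a)).add (hY.smul (Complex.conj_ofReal b))
  obtain ⟨P, hP, hP1, hPZ⟩ := exists_re_trace_mul_eq_trPos hZ
  rw [← hPZ, Matrix.mul_add, Matrix.mul_smul, Matrix.mul_smul, trace_add, trace_smul,
    trace_smul, Complex.add_re, smul_eq_mul, smul_eq_mul, Complex.re_ofReal_mul,
    Complex.re_ofReal_mul]
  gcongr
  exacts [re_trace_mul_le_trPos hX hP hP1, re_trace_mul_le_trPos hY hP hP1]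

lemma trPos_neg_eq_of_trace_eq_zero {X : Matrix n n ℂ} (hX : X.IsHermitian)
    (htr : X.trace = 0) : trPos (-X) = trPos X := by
  have key : ∀ Y : Matrix n n ℂ, Y.IsHermitian → Y.trace = 0 → trPos (-Y) ≤ trPos Y := by
    intro Y hY htrY
    obtain ⟨P, hP, hP1, hPY⟩ := exists_re_trace_mul_eq_trPos hY.neg
    have hP' : (1 - (1 - P)).PosSemidef := by rwa [sub_sub_cancel]
    calc trPos (-Y) = ((1 - P) * Y).trace.re := by
          rw [← hPY, Matrix.sub_mul, Matrix.one_mul, trace_sub, htrY, zero_sub, Matrix.mul_neg,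
            trace_neg]
      _ ≤ trPos Y := re_trace_mul_le_trPos hY hP1 hP'
  refine le_antisymm (key X hX htr) ?_
  simpa using key (-X) hX.neg (by rw [trace_neg, htr, neg_zero])

lemma Egamma_nonneg (γ : ℝ) (ρ σ : Matrix n n ℂ) : 0 ≤ Egamma γ ρ σ := trPos_nonneg _

lemma convexOn_Egamma {ρ σ : Matrix n n ℂ} (hρ : ρ.IsHermitian) (hσ : σ.IsHermitian) :
    ConvexOn ℝ Set.univ (fun γ => Egamma γ ρ σ) := by
  refine ⟨convex_univ, fun x _ y _ a b ha hb hab => ?_⟩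
  have hab' : (a : ℂ) + b = 1 := by exact_mod_cast hab
  have hsplit : ρ - ((a * x + b * y : ℝ) : ℂ) • σ
      = (a : ℂ) • (ρ - (x : ℂ) • σ) + (b : ℂ) • (ρ - (y : ℂ) • σ) := by
    push_cast
    linear_combination (norm := module) (-hab') • ρ
  have hdiff (t : ℝ) : (ρ - (t : ℂ) • σ).IsHermitian := hρ.sub (hσ.smul (Complex.conj_ofReal t))
  simp only [Egamma, smul_eq_mul]
  rw [hsplit]
  exact trPos_smul_add_smul_le (hdiff x) (hdiff y) ha hb

lemma Egamma_eq_zero_of_le {ρ σ : Matrix n n ℂ} (hσ : σ.PosSemidef) {c γ : ℝ}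
    (h : ((c : ℂ) • σ - ρ).PosSemidef) (hγ : c ≤ γ) : Egamma γ ρ σ = 0 := by
  apply trPos_eq_zero_of_posSemidef_neg
  have hsplit : -(ρ - (γ : ℂ) • σ) = ((c : ℂ) • σ - ρ) + ((γ - c : ℝ) : ℂ) • σ := by
    push_cast
    module
  rw [hsplit]
  exact h.add (hσ.smul (Complex.zero_le_real.mpr (sub_nonneg.mpr hγ)))

lemma Egamma_le_of_mem_Icc {ρ σ : Matrix n n ℂ} (hρ : ρ.IsHermitian) (hσ : σ.IsHermitian)
    {c : ℝ} (hc : 1 < c) (h : ((c : ℂ) • σ - ρ).PosSemidef) {γ : ℝ} (hγ : γ ∈ Set.Icc 1 c) :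
    Egamma γ ρ σ ≤ (c - γ) / (c - 1) * Egamma 1 ρ σ := by
  have hc1 : 0 < c - 1 := sub_pos.mpr hc
  have hzero : Egamma c ρ σ = 0 := trPos_eq_zero_of_posSemidef_neg (by rwa [neg_sub])
  have hconv := (convexOn_Egamma hρ hσ).2 (Set.mem_univ 1) (Set.mem_univ c)
    (div_nonneg (sub_nonneg.mpr hγ.2) hc1.le) (div_nonneg (sub_nonneg.mpr hγ.1) hc1.le)
    (by rw [← add_div, div_eq_one_iff_eq hc1.ne']; ring)
  have hγ' : (c - γ) / (c - 1) + (γ - 1) / (c - 1) * c = γ := by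
    field_simp
    ring
  simpa [hγ', hzero] using hconv

lemma Egamma_one_comm {ρ σ : Matrix n n ℂ} (hρ : ρ.IsHermitian) (hσ : σ.IsHermitian)
    (htr : ρ.trace = σ.trace) : Egamma 1 σ ρ = Egamma 1 ρ σ := by
  simp only [Egamma, Complex.ofReal_one, one_smul]
  rw [← neg_sub, trPos_neg_eq_of_trace_eq_zero (hρ.sub hσ) (by rw [trace_sub, htr, sub_self])]

end HockeyStick

lemma continuousOn_rpow_neg_three_halves_mul_sub (c : ℝ) :
    ContinuousOn (fun γ : ℝ => γ ^ (-(3:ℝ)/2) * (c - γ)) (Set.Ici 1) :=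
  ((continuousOn_id.rpow_const fun _ hx => Or.inl (zero_lt_one.trans_le hx).ne').mul
    (continuousOn_const.sub continuousOn_id))

lemma integral_rpow_neg_three_halves_mul_sub {c : ℝ} (hc : 1 ≤ c) :
    ∫ γ in (1:ℝ)..c, γ ^ (-(3:ℝ)/2) * (c - γ) = 2 * (c ^ ((1:ℝ)/2) - 1) ^ 2 := by
  have hderiv : ∀ γ ∈ Set.uIcc 1 c,
      HasDerivAt (fun x : ℝ => -2 * c * x ^ (-(1:ℝ)/2) - 2 * x ^ ((1:ℝ)/2))
        (γ ^ (-(3:ℝ)/2) * (c - γ)) γ := by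
    intro γ hγ
    have hγ0 : 0 < γ := by linarith [(Set.uIcc_of_le hc ▸ hγ).1]
    refine (((Real.hasDerivAt_rpow_const (p := -(1:ℝ)/2) (Or.inl hγ0.ne')).const_mul
      (-2 * c)).sub ((Real.hasDerivAt_rpow_const (p := (1:ℝ)/2) (Or.inl hγ0.ne')).const_mul
        2)).congr_deriv ?_
    have h3 : γ ^ (-(1:ℝ)/2) = γ ^ (-(3:ℝ)/2) * γ := by
      rw [← Real.rpow_add_one hγ0.ne']; norm_num
    rw [show -(1:ℝ)/2 - 1 = -(3:ℝ)/2 by norm_num, show (1:ℝ)/2 - 1 = -(1:ℝ)/2 by norm_num, h3]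
    ring
  have hcont : ContinuousOn (fun γ : ℝ => γ ^ (-(3:ℝ)/2) * (c - γ)) (Set.uIcc 1 c) :=
    (continuousOn_rpow_neg_three_halves_mul_sub c).mono
      (Set.uIcc_of_le hc ▸ Set.Icc_subset_Ici_self)
  rw [intervalIntegral.integral_eq_sub_of_hasDerivAt hderiv hcont.intervalIntegrable,
    Real.one_rpow, Real.one_rpow]
  have hc0 : 0 < c := by linarith
  have hsq : c ^ ((1:ℝ)/2) * c ^ ((1:ℝ)/2) = c := by
    rw [← Real.rpow_add hc0]; norm_num
  have hinv : c * c ^ (-(1:ℝ)/2) = c ^ ((1:ℝ)/2) := by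
    nth_rewrite 1 [← Real.rpow_one c]
    rw [← Real.rpow_add hc0]; norm_num
  linear_combination (-2) * hinv - 2 * hsq

open MeasureTheory in
lemma setIntegral_Ioi_rpow_neg_three_halves_mul_le {f : ℝ → ℝ} {c K : ℝ} (hc : 1 ≤ c)
    (hf0 : ∀ γ ∈ Set.Ioi 1, 0 ≤ f γ) (hf : ∀ γ ∈ Set.Ioc 1 c, f γ ≤ K * (c - γ))
    (hfc : ∀ γ, c < γ → f γ = 0) :
    ∫ γ in Set.Ioi 1, γ ^ (-(3:ℝ)/2) * f γ ≤ 2 * K * (c ^ ((1:ℝ)/2) - 1) ^ 2 := by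
  set g := (Set.Ioc 1 c).indicator fun γ : ℝ => K * (γ ^ (-(3:ℝ)/2) * (c - γ))
  have hg : IntegrableOn g (Set.Ioi 1) := by
    have hIoc : IntegrableOn (fun γ : ℝ => γ ^ (-(3:ℝ)/2) * (c - γ)) (Set.Ioc 1 c) :=
      ((continuousOn_rpow_neg_three_halves_mul_sub c).mono
        Set.Icc_subset_Ici_self).integrableOn_Icc.mono_set Set.Ioc_subset_Icc_self
    exact (IntegrableOn.integrable_indicator (hIoc.const_mul K) measurableSet_Ioc).integrableOn
  have hfg : ∀ γ ∈ Set.Ioi 1, γ ^ (-(3:ℝ)/2) * f γ ≤ g γ := by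
    intro γ hγ
    have hpow : 0 ≤ γ ^ (-(3:ℝ)/2) := Real.rpow_nonneg (zero_le_one.trans hγ.le) _
    simp only [g]
    rcases le_or_gt γ c with hγc | hγc
    · rw [Set.indicator_of_mem (show γ ∈ Set.Ioc 1 c from ⟨hγ, hγc⟩)]
      nlinarith [hf γ ⟨hγ, hγc⟩]
    · rw [Set.indicator_of_notMem fun h : γ ∈ Set.Ioc 1 c => hγc.not_ge h.2, hfc γ hγc,
        mul_zero]
  have hint : ∫ γ in Set.Ioi 1, g γ = K * (2 * (c ^ ((1:ℝ)/2) - 1) ^ 2) := by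
    rw [integral_indicator measurableSet_Ioc, Measure.restrict_restrict measurableSet_Ioc,
      Set.inter_eq_self_of_subset_left Set.Ioc_subset_Ioi_self,
      ← intervalIntegral.integral_of_le hc, intervalIntegral.integral_const_mul,
      integral_rpow_neg_three_halves_mul_sub hc]
  calc ∫ γ in Set.Ioi 1, γ ^ (-(3:ℝ)/2) * f γ ≤ ∫ γ in Set.Ioi 1, g γ :=
        setIntegral_mono_of_nonneg
          (fun γ hγ => mul_nonneg (Real.rpow_nonneg (zero_le_one.trans hγ.le) _) (hf0 γ hγ))
          hfg hg
    _ = 2 * K * (c ^ ((1:ℝ)/2) - 1) ^ 2 := by rw [hint]; ring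

open MeasureTheory in
/-- If `ρ ≤ e^ε σ` and `σ ≤ e^ε ρ` (i.e. `D_∞(ρ‖σ) ≤ ε` and `D_∞(σ‖ρ) ≤ ε`), then
`E_γ(ρ‖σ) ≤ ((e^ε-γ)/(e^ε-1))·E₁(ρ‖σ)` for all `γ ∈ [1, e^ε]`, and consequently
`H_{1/2}(ρ‖σ) = (1/2)∫₁^∞ γ^{-3/2}(E_γ(ρ‖σ)+E_γ(σ‖ρ)) dγ
  ≤ 2·((e^{ε/2}-1)²/(e^ε-1))·E₁(ρ‖σ)`. -/
theorem stmt_19 {n : Type*} [Fintype n] [DecidableEq n] (ρ σ : Matrix n n ℂ)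
    (hρ : IsDensity ρ) (hσ : IsDensity σ) (ε : ℝ) (hε : 0 < ε)
    (h1 : (((Real.exp ε : ℝ) : ℂ) • σ - ρ).PosSemidef)
    (h2 : (((Real.exp ε : ℝ) : ℂ) • ρ - σ).PosSemidef) :
    (∀ γ ∈ Set.Icc (1 : ℝ) (Real.exp ε),
        Egamma γ ρ σ ≤ ((Real.exp ε - γ) / (Real.exp ε - 1)) * Egamma 1 ρ σ) ∧
      (1/2) * (∫ γ in Set.Ioi (1:ℝ),
          γ ^ (-(3:ℝ)/2) * (Egamma γ ρ σ + Egamma γ σ ρ)) ≤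
        2 * ((Real.exp (ε/2) - 1)^2 / (Real.exp ε - 1)) * Egamma 1 ρ σ := by
  set c := Real.exp ε
  have hc : 1 < c := Real.one_lt_exp_iff.mpr hε
  have hρσ (γ) (hγ : γ ∈ Set.Icc 1 c) := Egamma_le_of_mem_Icc hρ.1.1 hσ.1.1 hc h1 hγ
  have hσρ (γ) (hγ : γ ∈ Set.Icc 1 c) : Egamma γ σ ρ ≤ (c - γ) / (c - 1) * Egamma 1 ρ σ := by
    rw [← Egamma_one_comm hρ.1.1 hσ.1.1 (hρ.2.trans hσ.2.symm)]
    exact Egamma_le_of_mem_Icc hσ.1.1 hρ.1.1 hc h2 hγ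
  refine ⟨hρσ, ?_⟩
  have hint := setIntegral_Ioi_rpow_neg_three_halves_mul_le (K := 2 * Egamma 1 ρ σ / (c - 1))
    (f := fun γ => Egamma γ ρ σ + Egamma γ σ ρ) hc.le
    (fun γ _ => add_nonneg (Egamma_nonneg γ ρ σ) (Egamma_nonneg γ σ ρ))
    (fun γ hγ => (add_le_add (hρσ γ (Set.Ioc_subset_Icc_self hγ))
      (hσρ γ (Set.Ioc_subset_Icc_self hγ))).trans_eq (by ring))
    (fun γ hγ => by
      rw [Egamma_eq_zero_of_le hσ.1 h1 hγ.le, Egamma_eq_zero_of_le hρ.1 h2 hγ.le, add_zero])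
  rw [← Real.exp_mul, mul_one_div] at hint
  calc (1/2) * (∫ γ in Set.Ioi (1:ℝ), γ ^ (-(3:ℝ)/2) * (Egamma γ ρ σ + Egamma γ σ ρ))
      ≤ (1/2) * (2 * (2 * Egamma 1 ρ σ / (c - 1)) * (Real.exp (ε/2) - 1) ^ 2) := by gcongr
    _ = 2 * ((Real.exp (ε/2) - 1)^2 / (c - 1)) * Egamma 1 ρ σ := by ring
end
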